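/- arXiv:1112.2991 — 11 statements merged into one kernel-verified Lean document; each statement's English description precedes it below -/
import Mathlib

section
/- Let $v$ be a non-dyadic finite place of a number field $F$, let $\mathfrak{o}_v$ be the valuation ring of $F_v$, and suppose $q(x,y,z) = xy - \delta z^2$ with $\delta \in \mathfrak{o}_v^\times$. Let $a \in \mathfrak{o}_v \setminus \{0\}$ with $-a\delta \notin F_v^{\times 2}$ and with $v(a)$ even. Then for every solution $(x_0,y_0,z_0) \in \mathfrak{o}_v^3$ of $q(x,y,z)=a$ in which at least one coordinate is a unit, the valuation $v(x_0)$ is even. -/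
/-!
Since `2` is a unit, Heron's iteration `x ↦ (x + e / x) / 2` started at `1` converges
quadratically in the complete field `F_v` whenever `v (e - 1) < 1`; hence every `c` with
`v (c - u ^ 2) < v (u ^ 2)` is a square. Applied to `c = -aδ`, `u = δz` and the identity
`-aδ - (δz)² = -δxy`, the non-squareness of `-aδ` gives `v(z)² ≤ v(x) v(y)`. If `z` is a unit this
forces `x` to be a unit; if `y` is a unit then `v(x) = v(z)²`, or the inequality is strict and
`v(x) = v(xy - δz²) = v(a)`.
-/

open IsDedekindDomain Multiplicative Filter Topology

def heronSeq {K : Type*} [Field K] (e : K) : ℕ → K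
  | 0 => 1
  | n + 1 => (heronSeq e n + e / heronSeq e n) / 2

namespace Valued

variable {K Γ₀ : Type*} [Field K] [LinearOrderedCommGroupWithZero Γ₀] [Valued K Γ₀]

theorem nonarchimedeanRing : NonarchimedeanRing K := by
  convert (Valued.v (R := K)).subgroups_basis.nonarchimedean
  exact congrArg (@UniformSpace.toTopologicalSpace K) (toUniformSpace_eq K Γ₀)

attribute [local instance] nonarchimedeanRing

theorem tendsto_zero_of_le_pow [MulArchimedean Γ₀] {f : ℕ → K} {t : Γ₀} (ht : t < 1)
    (hf : ∀ n, v (f n) ≤ t ^ n) : Tendsto f atTop (𝓝 0) := by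
  rw [(hasBasis_nhds_zero K Γ₀).tendsto_right_iff]
  intro γ _
  obtain ⟨N, hN⟩ := exists_pow_lt₀ ht
    (Units.map (MonoidWithZeroHom.ValueGroup₀.embedding (f := .ofClass (v : Valuation K Γ₀))) γ)
  filter_upwards [eventually_ge_atTop N] with n hn
  rw [Valuation.restrict_lt_iff_lt_embedding]
  exact ((hf n).trans (pow_le_pow_right_of_le_one' ht.le hn)).trans_lt hN

variable {e x y z δ a : K}

theorem valuation_heron_step_sub (h2 : v (2 : K) = 1) (hx : v x = 1) :
    v ((x + e / x) / 2 - x) = v (x ^ 2 - e) := by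
  have hx0 : x ≠ 0 := v.ne_zero_iff.mp (by simp [hx])
  have h20 : (2 : K) ≠ 0 := v.ne_zero_iff.mp (by simp [h2])
  rw [show (x + e / x) / 2 - x = (e - x ^ 2) / (2 * x) by field_simp; ring,
    map_div₀, map_mul, h2, hx, mul_one, div_one, Valuation.map_sub_swap]

theorem valuation_heron_step_sq_sub (h2 : v (2 : K) = 1) (hx : v x = 1) :
    v (((x + e / x) / 2) ^ 2 - e) = v (x ^ 2 - e) ^ 2 := by
  have hx0 : x ≠ 0 := v.ne_zero_iff.mp (by simp [hx])
  have h20 : (2 : K) ≠ 0 := v.ne_zero_iff.mp (by simp [h2])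
  rw [show ((x + e / x) / 2) ^ 2 - e = (x ^ 2 - e) ^ 2 / (2 * x) ^ 2 by field_simp; ring]
  simp [h2, hx]

theorem valuation_heronSeq (h2 : v (2 : K) = 1) (he : v (e - 1) < 1) (n : ℕ) :
    v (heronSeq e n) = 1 ∧ v (heronSeq e n ^ 2 - e) ≤ v (e - 1) ^ 2 ^ n := by
  induction n with
  | zero => simp [heronSeq, Valuation.map_sub_swap]
  | succ n ih =>
    obtain ⟨hx, hsq⟩ := ih
    refine ⟨?_, ?_⟩
    · rw [heronSeq, ← sub_add_cancel ((_ + _) / 2) (heronSeq e n),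
        Valuation.map_add_eq_of_lt_right, hx]
      rw [valuation_heron_step_sub h2 hx, hx]
      exact hsq.trans_lt (pow_lt_one' he (by positivity))
    · rw [heronSeq, valuation_heron_step_sq_sub h2 hx, pow_succ 2 n, pow_mul]
      exact pow_le_pow_left' hsq 2

theorem exists_sq_eq_of_valuation_sub_one_lt_one [MulArchimedean Γ₀] [CompleteSpace K]
    (h2 : v (2 : K) = 1) (he : v (e - 1) < 1) : ∃ b : K, b ^ 2 = e := by
  have hbound (n : ℕ) : v (heronSeq e n ^ 2 - e) ≤ v (e - 1) ^ n :=
    (valuation_heronSeq h2 he n).2.trans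
      (pow_le_pow_right_of_le_one' he.le Nat.lt_two_pow_self.le)
  have hsq : Tendsto (fun n ↦ heronSeq e n ^ 2 - e) atTop (𝓝 0) :=
    tendsto_zero_of_le_pow he hbound
  have hstep : Tendsto (fun n ↦ heronSeq e (n + 1) - heronSeq e n) atTop (𝓝 0) :=
    tendsto_zero_of_le_pow he fun n ↦
      (valuation_heron_step_sub h2 (valuation_heronSeq h2 he n).1).trans_le (hbound n)
  obtain ⟨b, hb⟩ := cauchySeq_tendsto_of_complete
    (NonarchimedeanAddGroup.cauchySeq_of_tendsto_sub_nhds_zero hstep)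
  exact ⟨b, sub_eq_zero.mp (tendsto_nhds_unique ((hb.pow 2).sub_const e) hsq)⟩

theorem exists_sq_eq_of_valuation_sub_sq_lt [MulArchimedean Γ₀] [CompleteSpace K]
    (h2 : v (2 : K) = 1) {c u : K} (h : v (c - u ^ 2) < v (u ^ 2)) : ∃ b : K, b ^ 2 = c := by
  have hu : u ≠ 0 := by
    rintro rfl
    simp at h
  have he : v (c / u ^ 2 - 1) < 1 := by
    rwa [show c / u ^ 2 - 1 = (c - u ^ 2) / u ^ 2 by field_simp, map_div₀,
      div_lt_one₀ (zero_lt_iff.mpr (v.ne_zero_iff.mpr (pow_ne_zero 2 hu)))]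
  obtain ⟨b, hb⟩ := exists_sq_eq_of_valuation_sub_one_lt_one h2 he
  exact ⟨b * u, by rw [mul_pow, hb]; field_simp⟩

theorem valuation_sq_le_mul_of_not_exists_sq [MulArchimedean Γ₀] [CompleteSpace K]
    (h2 : v (2 : K) = 1) (hδ : v δ = 1) (hns : ¬∃ b : K, b ^ 2 = -(a * δ))
    (heq : x * y - δ * z ^ 2 = a) : v z ^ 2 ≤ v x * v y := by
  by_contra! hlt
  refine hns (exists_sq_eq_of_valuation_sub_sq_lt h2 (u := δ * z) ?_)
  rw [show -(a * δ) - (δ * z) ^ 2 = -δ * (x * y) by linear_combination δ * heq]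
  simpa [hδ] using hlt

theorem valuation_eq_one_or_eq_or_eq_sq (hx : v x ≤ 1) (hy : v y ≤ 1) (hδ : v δ = 1)
    (hsq : v z ^ 2 ≤ v x * v y) (heq : x * y - δ * z ^ 2 = a)
    (hprim : v x = 1 ∨ v y = 1 ∨ v z = 1) : v x = 1 ∨ v x = v a ∨ v x = v z ^ 2 := by
  rcases hprim with hx1 | hy1 | hz1
  · exact Or.inl hx1
  · rw [hy1, mul_one] at hsq
    rcases hsq.lt_or_eq with hlt | heq'
    · refine Or.inr (Or.inl ?_)
      rw [← heq, Valuation.map_sub_eq_of_lt_left, map_mul, hy1, mul_one]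
      simpa [hy1, hδ] using hlt
    · exact Or.inr (Or.inr heq'.symm)
  · refine Or.inl (le_antisymm hx ?_)
    calc 1 = v z ^ 2 := by rw [hz1, one_pow]
      _ ≤ v x * v y := hsq
      _ ≤ v x := mul_le_of_le_one_right' hy

end Valued

theorem IsDedekindDomain.HeightOneSpectrum.valuedAdicCompletion_two_eq_one {R K : Type*}
    [CommRing R] [IsDedekindDomain R] [Field K] [Algebra R K] [IsFractionRing R K]
    (v : HeightOneSpectrum R) (h : (2 : R) ∉ v.asIdeal) :
    Valued.v (2 : v.adicCompletion K) = 1 := by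
  rw [← map_ofNat (algebraMap R (v.adicCompletion K)) 2, valuedAdicCompletion_eq_valuation]
  exact v.valuation_eq_one_iff_notMem.mpr h

/-- `v` a non-dyadic finite place of a number field `F`, `𝓞_v` the
valuation ring of `F_v`, `q(x,y,z) = xy - δz²` with `δ ∈ 𝓞_v^×`.  Let
`a ∈ 𝓞_v \ {0}` with `-aδ` not a square in `F_v` and `v(a)` even.  Then every
solution `(x₀,y₀,z₀) ∈ 𝓞_v³` of `q = a` with at least one coordinate a unit has
`v(x₀)` even.  (The valuation on `F_v` is the valued-field valuation, with values
in `ℤₘ₀`; a uniformizer has valuation `ofAdd (-1)`.) -/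
theorem stmt2 (F : Type*) [Field F] [NumberField F]
    (v : HeightOneSpectrum (NumberField.RingOfIntegers F))
    (hv : (2 : NumberField.RingOfIntegers F) ∉ v.asIdeal)
    (δ : v.adicCompletionIntegers F) (hδ : IsUnit δ)
    (a : v.adicCompletionIntegers F) (ha : a ≠ 0)
    (hns : ¬ ∃ b : v.adicCompletion F, b ^ 2 = -((a : v.adicCompletion F) * δ))
    (haeven : ∃ m : ℤ, Valued.v (a : v.adicCompletion F) =
      ((ofAdd (2 * m) : Multiplicative ℤ) : WithZero (Multiplicative ℤ)))
    (x₀ y₀ z₀ : v.adicCompletionIntegers F)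
    (heq : x₀ * y₀ - δ * z₀ ^ 2 = a)
    (hprim : IsUnit x₀ ∨ IsUnit y₀ ∨ IsUnit z₀) :
    ∃ m : ℤ, Valued.v (x₀ : v.adicCompletion F) =
      ((ofAdd (2 * m) : Multiplicative ℤ) : WithZero (Multiplicative ℤ)) := by
  have hunit (w : v.adicCompletionIntegers F) :
      IsUnit w ↔ Valued.v (w : v.adicCompletion F) = 1 :=
    (Valuation.valuationSubring.integers _).isUnit_iff_valuation_eq_one
  have heqK : (x₀ : v.adicCompletion F) * y₀ - δ * z₀ ^ 2 = a := by
    exact_mod_cast congrArg Subtype.val heq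
  have hδ1 := (hunit δ).mp hδ
  have hsq := Valued.valuation_sq_le_mul_of_not_exists_sq
    (v.valuedAdicCompletion_two_eq_one hv) hδ1 hns heqK
  simp only [hunit] at hprim
  rcases Valued.valuation_eq_one_or_eq_or_eq_sq x₀.2 y₀.2 hδ1 hsq heqK hprim with h | h | h
  · exact ⟨0, h⟩
  · obtain ⟨m, hm⟩ := haeven
    exact ⟨m, h.trans hm⟩
  · have hz : (z₀ : v.adicCompletion F) ≠ 0 := by
      intro hz
      rw [hz, map_zero, zero_pow two_ne_zero, Valuation.zero_iff] at h
      exact ha (by simpa [h, hz, eq_comm] using heqK)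
    obtain ⟨k, hk⟩ := WithZero.ne_zero_iff_exists.mp (Valued.v.ne_zero_iff.mpr hz)
    exact ⟨toAdd k, by rw [h, ← hk, two_mul, ofAdd_add, ofAdd_toAdd, sq]; rfl⟩
end

section
/- Let $F$ be a number field, $q(x,y,z)$ a non-degenerate ternary quadratic form over $F$, and $p(t) = c \cdot p_1(t)^{e_1} \cdots p_s(t)^{e_s}$ with $c \in F^\times$ and $p_i$ distinct monic irreducible polynomials. If at least one exponent $e_i$ is odd, then there exist infinitely many finite places $w$ of $F$ for which there exists $t_w \in \mathfrak{o}_w$ such that $w(p(t_w))$ is odd and $-p(t_w)\cdot\det(q) \notin F_w^{\times 2}$. -/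
/-!
Pick `i₀` with `e i₀` odd and a scalar multiple `G` of `p i₀` with coefficients in `𝓞 F`, and write
`p = G ^ e i₀ * H`. Since `G` is separable and prime to the other `pᵢ`, there is a Bézout relation
`a G + b H G' = 1`. By Schur's theorem `G` has a root modulo infinitely many primes `w`, and for all
but finitely many `w` the polynomials `a`, `b`, `H` are `w`-integral and `det M` is a `w`-unit.
At such a `w` the Bézout relation makes `H` and `G'` units at every root of `G` modulo `w`, and one
Newton step gives an integral `t` with `w (G t) = 1`. Then `w (p t) = e i₀` is odd, so
`-p(t) det M` is not a square in `F_w`.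
-/

open IsDedekindDomain Multiplicative
open Polynomial Filter WithZero NumberField

namespace Valuation

variable {A Γ₀ : Type*} [CommRing A] [LinearOrderedCommMonoidWithZero Γ₀] (v : Valuation A Γ₀)

lemma map_eval_le_one {f : A[X]} (hf : ∀ n, v (f.coeff n) ≤ 1) {x : A} (hx : v x ≤ 1) :
    v (f.eval x) ≤ 1 := by
  rw [eval_eq_sum_range]
  exact v.map_sum_le fun i _ => by
    rw [map_mul, map_pow]; exact mul_le_one' (hf i) (pow_le_one' hx _)

lemma map_eq_one_of_add_mul_eq_one {a x b y z : A} (h : a * x + b * (y * z) = 1)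
    (ha : v a ≤ 1) (hx : v x < 1) (hb : v b ≤ 1) (hy : v y ≤ 1) (hz : v z ≤ 1) :
    v y = 1 ∧ v z = 1 := by
  have hax : v (a * x) < 1 := by
    rw [map_mul]; exact (mul_le_of_le_one_left' ha).trans_lt hx
  have hbyz : 1 ≤ v b * (v y * v z) := by
    have := v.map_add (a * x) (b * (y * z))
    rw [h, v.map_one, le_max_iff] at this
    simpa only [map_mul] using this.resolve_left hax.not_ge
  exact ⟨le_antisymm hy <| hbyz.trans <|
      (mul_le_of_le_one_left' hb).trans (mul_le_of_le_one_right' hz),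
    le_antisymm hz <| hbyz.trans <|
      (mul_le_of_le_one_left' hb).trans (mul_le_of_le_one_left' hy)⟩

end Valuation

lemma Valuation.not_exists_sq_eq_of_eq_exp_odd {A : Type*} [CommRing A] (v : Valuation A ℤᵐ⁰)
    {y : A} {m : ℤ} (hy : v y = exp (2 * m + 1)) : ¬∃ b, b ^ 2 = y := by
  rintro ⟨b, rfl⟩
  have hb : v b ≠ 0 := fun h => by simp [h] at hy
  rw [map_pow, ← exp_log hb, ← exp_nsmul, exp_inj, nsmul_eq_mul] at hy
  omega

lemma Polynomial.infinite_image_eval {R : Type*} [CommRing R] [IsDomain R] {p : R[X]}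
    (hp : 0 < p.natDegree) {s : Set R} (hs : s.Infinite) :
    ((fun x => p.eval x) '' s).Infinite := by
  refine fun hfin => hs ((hfin.preimage' fun b _ => ?_).subset (Set.subset_preimage_image _ s))
  have hne : p - C b ≠ 0 := fun h => by
    rw [sub_eq_zero] at h; simp [h] at hp
  simpa [Set.preimage, sub_eq_zero] using finite_setOfPred_isRoot hne

lemma exists_eq_pow_mul_isCoprime_mul_derivative {K ι : Type*} [Field K] [PerfectField K]
    [Fintype ι] [DecidableEq ι] {c : K} (hc : c ≠ 0) {P : ι → K[X]} (e : ι → ℕ)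
    (hirr : ∀ i, Irreducible (P i)) (hmonic : ∀ i, (P i).Monic) (hinj : Function.Injective P)
    (i₀ : ι) {G : K[X]} (hG : Associated (P i₀) G) :
    ∃ H, C c * ∏ i, P i ^ e i = G ^ e i₀ * H ∧ IsCoprime G (H * derivative G) := by
  have hGirr : Irreducible G := hG.irreducible (hirr i₀)
  obtain ⟨u, rfl⟩ := id hG
  refine ⟨C c * ↑u⁻¹ ^ e i₀ * ∏ j ∈ Finset.univ.erase i₀, P j ^ e j, ?_, ?_⟩
  · rw [← Finset.mul_prod_erase _ _ (Finset.mem_univ i₀)]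
    symm
    calc (P i₀ * u) ^ e i₀ * (C c * ↑u⁻¹ ^ e i₀ * ∏ j ∈ Finset.univ.erase i₀, P j ^ e j)
        = C c * (P i₀ ^ e i₀ * ∏ j ∈ Finset.univ.erase i₀, P j ^ e j) *
          ((u : K[X]) * ↑u⁻¹) ^ e i₀ := by ring
      _ = _ := by rw [Units.mul_inv, one_pow, mul_one]
  refine IsCoprime.mul_right ?_ (PerfectField.separable_of_irreducible hGirr)
  rw [mul_assoc, isCoprime_mul_unit_left_right (isUnit_C.2 hc.isUnit),
    isCoprime_mul_unit_left_right (u⁻¹.isUnit.pow _)]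
  refine IsCoprime.prod_right fun j hj => IsCoprime.pow_right ?_
  rw [hGirr.coprime_iff_not_dvd]
  intro hdvd
  have hassoc : Associated (P i₀) (P j) := hG.trans (hGirr.associated_of_dvd (hirr j) hdvd)
  exact Finset.ne_of_mem_erase hj
    (hinj (eq_of_monic_of_associated (hmonic i₀) (hmonic j) hassoc)).symm

lemma exists_map_eq_C_mul {R K : Type*} [CommRing R] [Nontrivial R] [Field K] [Algebra R K]
    [IsFractionRing R K] (f : K[X]) :
    ∃ (g : R[X]) (u : K), u ≠ 0 ∧ g.map (algebraMap R K) = C u * f := by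
  obtain ⟨b, hb, hmap⟩ := IsLocalization.integerNormalization_spec (nonZeroDivisors R) f
  exact ⟨_, _, IsFractionRing.to_map_ne_zero_of_mem_nonZeroDivisors hb,
    by rw [hmap, Algebra.smul_def, Polynomial.algebraMap_apply]⟩

namespace IsDedekindDomain.HeightOneSpectrum

section CommRing

variable {R : Type*} [CommRing R]

lemma exists_mem_asIdeal_of_not_isUnit {u : R} (h0 : u ≠ 0) (hu : ¬IsUnit u) :
    ∃ v : HeightOneSpectrum R, u ∈ v.asIdeal := by
  obtain ⟨J, hJ, hle⟩ := Ideal.exists_le_maximal (Ideal.span {u})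
    (by rwa [Ne, Ideal.span_singleton_eq_top])
  have hu : u ∈ J := hle (Ideal.mem_span_singleton_self u)
  exact ⟨⟨J, hJ.isPrime, fun h => h0 (by simpa [h] using hu)⟩, hu⟩

/-- `g (x₀ + g x₀ * m₀ * x) = g x₀ * u` with `u ≡ 1 mod m₀`, so every prime dividing `u` divides
a value of `g` without containing `m₀`. -/
lemma exists_eval_eq_mul_isUnit_or_eq_zero {g : R[X]} {m₀ : R}
    (hm₀ : ∀ v : HeightOneSpectrum R, (∃ t, g.eval t ∈ v.asIdeal) → m₀ ∈ v.asIdeal) (x₀ x : R) :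
    ∃ u, g.eval (x₀ + g.eval x₀ * m₀ * x) = g.eval x₀ * u ∧ (IsUnit u ∨ u = 0) := by
  obtain ⟨y, hy⟩ := sub_dvd_eval_sub (x₀ + g.eval x₀ * m₀ * x) x₀ g
  have hval : g.eval (x₀ + g.eval x₀ * m₀ * x) = g.eval x₀ * (1 + m₀ * (x * y)) := by
    linear_combination hy
  refine ⟨1 + m₀ * (x * y), hval, or_iff_not_imp_right.2 fun hu0 => not_not.1 fun hu => ?_⟩
  obtain ⟨v, hv⟩ := exists_mem_asIdeal_of_not_isUnit hu0 hu
  have hm₀v := hm₀ v ⟨_, hval ▸ Ideal.mul_mem_left _ _ hv⟩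
  have hone : (1 : R) ∈ v.asIdeal := by
    simpa using Ideal.sub_mem _ hv (Ideal.mul_mem_right (x * y) _ hm₀v)
  exact v.isPrime.ne_top ((Ideal.eq_top_iff_one _).2 hone)

end CommRing

variable {R : Type*} [CommRing R] [IsDedekindDomain R]

lemma exists_ne_zero_forall_mem_asIdeal {S : Set (HeightOneSpectrum R)} (hS : S.Finite) :
    ∃ m : R, m ≠ 0 ∧ ∀ v ∈ S, m ∈ v.asIdeal := by
  choose z hz hz0 using fun v : HeightOneSpectrum R =>
    Submodule.exists_mem_ne_zero_of_ne_bot v.ne_bot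
  refine ⟨∏ v ∈ hS.toFinset, z v, Finset.prod_ne_zero_iff.2 fun v _ => hz0 v, fun v hv => ?_⟩
  exact Ideal.mem_of_dvd _ (Finset.dvd_prod_of_mem z (hS.mem_toFinset.2 hv)) (hz v)

lemma exists_intValuation_eval_eq_exp_neg_one (v : HeightOneSpectrum R) {g : R[X]} {t : R}
    (hg : g.eval t ∈ v.asIdeal) (hg' : v.intValuation (g.derivative.eval t) = 1) :
    ∃ t', v.intValuation (g.eval t') = exp (-1) := by
  have hle : v.intValuation (g.eval t) ≤ exp (-1) := by
    simpa using (v.intValuation_le_pow_iff_mem _ 1).2 (by simpa using hg)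
  rcases hle.eq_or_lt with h | h
  · exact ⟨t, h⟩
  obtain ⟨π, hπ⟩ := v.intValuation_exists_uniformizer
  obtain ⟨k, hk⟩ := g.binomExpansion t π
  have hlin : v.intValuation (g.derivative.eval t * π) = exp (-1) := by
    rw [map_mul, hg', hπ, one_mul]
  have hquad : v.intValuation (k * π ^ 2) < exp (-1) := by
    calc v.intValuation (k * π ^ 2) ≤ exp (-1) ^ 2 := by
          rw [map_mul, map_pow, hπ]; exact mul_le_of_le_one_left' (v.intValuation_le_one k)
      _ < exp (-1) := by rw [← exp_nsmul, exp_lt_exp]; norm_num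
  have hfirst : v.intValuation (g.eval t + g.derivative.eval t * π) = exp (-1) := by
    rw [v.intValuation.map_add_eq_of_lt_right (hlin ▸ h), hlin]
  exact ⟨t + π, by rw [hk, v.intValuation.map_add_eq_of_lt_left (hfirst ▸ hquad), hfirst]⟩

variable {K : Type*} [Field K] [Algebra R K] [IsFractionRing R K]

lemma eventually_valuation_coeff_le_one (f : K[X]) :
    ∀ᶠ v : HeightOneSpectrum R in cofinite, ∀ n, v.valuation K (f.coeff n) ≤ 1 := by
  have : ∀ᶠ v : HeightOneSpectrum R in cofinite, ∀ n ∈ f.support,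
      v.valuation K (f.coeff n) ≤ 1 :=
    (eventually_all_finset _).2 fun n _ => by
      simpa [eventually_cofinite, Support] using Support.finite R (f.coeff n)
  filter_upwards [this] with v hv n
  by_cases hn : n ∈ f.support
  · exact hv n hn
  · simp [notMem_support_iff.1 hn]

lemma eventually_valuation_eq_one {x : K} (hx : x ≠ 0) :
    ∀ᶠ v : HeightOneSpectrum R in cofinite, v.valuation K x = 1 := by
  filter_upwards [eventually_valuation_coeff_le_one (R := R) (C x),
    eventually_valuation_coeff_le_one (R := R) (C x⁻¹)] with v h h'
  refine le_antisymm (by simpa using h 0) ((inv_le_one₀ ((v.valuation K).pos_iff.2 hx)).1 ?_)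
  simpa using h' 0

lemma exists_valuation_eval_eq_exp_neg_one_and_eq_one {v : HeightOneSpectrum R} {g : R[X]}
    {h a b : K[X]}
    (hab : a * g.map (algebraMap R K) + b * (h * derivative (g.map (algebraMap R K))) = 1)
    (ha : ∀ n, v.valuation K (a.coeff n) ≤ 1) (hb : ∀ n, v.valuation K (b.coeff n) ≤ 1)
    (hh : ∀ n, v.valuation K (h.coeff n) ≤ 1) {t₀ : R} (ht₀ : g.eval t₀ ∈ v.asIdeal) :
    ∃ t : R, v.intValuation (g.eval t) = exp (-1) ∧
      v.valuation K (h.eval (algebraMap R K t)) = 1 := by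
  have hunits : ∀ t : R, g.eval t ∈ v.asIdeal →
      v.valuation K (h.eval (algebraMap R K t)) = 1 ∧
        v.intValuation (g.derivative.eval t) = 1 := by
    intro t ht
    have heval : ∀ q : R[X], (q.map (algebraMap R K)).eval (algebraMap R K t) =
        algebraMap R K (q.eval t) := fun q => by rw [eval_map, eval₂_at_apply]
    have hbez := congrArg (eval (algebraMap R K t)) hab
    rw [derivative_map] at hbez
    simp only [eval_add, eval_mul, eval_one, heval] at hbez
    have hint := v.valuation_le_one (K := K) t
    rw [← valuation_of_algebraMap (K := K)]
    exact (v.valuation K).map_eq_one_of_add_mul_eq_one hbez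
      ((v.valuation K).map_eval_le_one ha hint) ((valuation_lt_one_iff_mem _ _).2 ht)
      ((v.valuation K).map_eval_le_one hb hint) ((v.valuation K).map_eval_le_one hh hint)
      (v.valuation_le_one _)
  obtain ⟨t, ht⟩ := exists_intValuation_eval_eq_exp_neg_one v ht₀ (hunits t₀ ht₀).2
  have htmem : g.eval t ∈ v.asIdeal := by
    rw [← intValuation_lt_one_iff_mem, ht, ← exp_zero, exp_lt_exp]; norm_num
  exact ⟨t, ht, (hunits t htmem).1⟩

lemma exists_adicCompletionIntegers_valued_aeval_eq_exp_odd {v : HeightOneSpectrum R}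
    {f : K[X]} {x d : K} (hx : v.valuation K x ≤ 1) {m : ℤ}
    (hf : v.valuation K (f.eval x) = exp (2 * m + 1)) (hd : v.valuation K d = 1) :
    ∃ t : v.adicCompletionIntegers K,
      (∃ m : ℤ, Valued.v (aeval (t : v.adicCompletion K) f) = exp (2 * m + 1)) ∧
      ¬∃ b : v.adicCompletion K,
        b ^ 2 = -aeval (t : v.adicCompletion K) f * algebraMap K (v.adicCompletion K) d := by
  have hval : ∀ y : K, Valued.v (algebraMap K (v.adicCompletion K) y) = v.valuation K y :=
    valuedAdicCompletion_eq_valuation' v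
  have haeval : aeval (algebraMap K (v.adicCompletion K) x) f =
      algebraMap K (v.adicCompletion K) (f.eval x) :=
    aeval_algebraMap_apply_eq_algebraMap_eval x f
  refine ⟨⟨algebraMap K _ x, by rw [mem_adicCompletionIntegers, hval]; exact hx⟩,
    ⟨m, by rw [haeval, hval, hf]⟩, Valuation.not_exists_sq_eq_of_eq_exp_odd Valued.v (m := m) ?_⟩
  rw [map_mul, Valuation.map_neg, haeval, hval, hval, hf, hd, mul_one]

end IsDedekindDomain.HeightOneSpectrum

namespace NumberField

variable {F : Type*} [Field F] [NumberField F]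

lemma infinite_range_norm_eval_intCast {g : (𝓞 F)[X]} (hg : 0 < g.natDegree) :
    (Set.range fun n : ℤ => Algebra.norm ℤ (g.eval (n : 𝓞 F))).Infinite := by
  set G := g.map (algebraMap (𝓞 F) F)
  set V : ℂ[X] := ∏ σ : F →ₐ[ℚ] ℂ, G.map (σ : F →+* ℂ)
  have hGdeg : G.natDegree = g.natDegree :=
    natDegree_map_eq_of_injective (IsFractionRing.injective (𝓞 F) F) g
  have hV : ∀ n : ℤ, V.eval (n : ℂ) = (Algebra.norm ℤ (g.eval (n : 𝓞 F)) : ℂ) := by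
    intro n
    have hnorm := Algebra.norm_eq_prod_embeddings ℚ ℂ (algebraMap (𝓞 F) F (g.eval n))
    rw [← Algebra.coe_norm_int, eq_ratCast, Rat.cast_intCast] at hnorm
    rw [eval_prod, hnorm]
    refine Finset.prod_congr rfl fun σ _ => ?_
    rw [eval_map, ← map_intCast (σ : F →+* ℂ), eval₂_at_apply, ← map_intCast (algebraMap (𝓞 F) F),
      eval_map_algebraMap, aeval_algebraMap_apply, coe_aeval_eq_eval]
    rfl
  have hVdeg : 0 < V.natDegree := by
    rw [natDegree_prod _ _ fun σ _ => ?_]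
    · simp only [natDegree_map, hGdeg, Finset.sum_const, Finset.card_univ, smul_eq_mul]
      exact Nat.mul_pos (by rw [AlgHom.card]; exact Module.finrank_pos) hg
    · exact (Polynomial.map_ne_zero_iff (σ : F →+* ℂ).injective).2
        (ne_zero_of_natDegree_gt (hGdeg ▸ hg))
  refine Set.Infinite.of_image (Int.cast : ℤ → ℂ) ?_
  have := infinite_image_eval hVdeg (Set.infinite_range_of_injective (Int.cast_injective (α := ℂ)))
  rw [← Set.range_comp] at this ⊢
  simpa [Function.comp_def, hV] using this

/-- Schur's theorem. If only finitely many primes divided values of `g`, then for `m₀` in all of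
them the norms of `g (x₀ + g x₀ * m₀ * n)`, `n : ℤ`, could only be `0` and `±N (g x₀)`. -/
theorem infinite_setOf_exists_eval_mem {g : (𝓞 F)[X]} (hg : 0 < g.natDegree) :
    {v : HeightOneSpectrum (𝓞 F) | ∃ t, g.eval t ∈ v.asIdeal}.Infinite := by
  intro hfin
  obtain ⟨x₀, hx₀⟩ : ∃ x₀, g.eval x₀ ≠ 0 := by
    by_contra! h
    exact ne_zero_of_natDegree_gt hg (Polynomial.funext (by simpa using h))
  obtain ⟨m₀, hm₀, hm₀S⟩ := HeightOneSpectrum.exists_ne_zero_forall_mem_asIdeal hfin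
  set c₀ := g.eval x₀
  set h := g.comp (C x₀ + C (c₀ * m₀) * X)
  have hdeg : 0 < h.natDegree := by
    rwa [natDegree_comp, add_comm, natDegree_linear (mul_ne_zero hx₀ hm₀), mul_one]
  refine infinite_range_norm_eval_intCast hdeg
    (Set.Finite.subset (s := {0, Algebra.norm ℤ c₀, -Algebra.norm ℤ c₀}) (by simp) ?_)
  rintro _ ⟨n, rfl⟩
  obtain ⟨u, hu, hunit⟩ :=
    HeightOneSpectrum.exists_eval_eq_mul_isUnit_or_eq_zero hm₀S x₀ (n : 𝓞 F)
  have hh : h.eval (n : 𝓞 F) = c₀ * u := by simpa [h, eval_comp, mul_assoc] using hu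
  rcases hunit with hunit | rfl
  · rcases Int.isUnit_iff.1 (hunit.map (Algebra.norm ℤ)) with h1 | h1 <;> simp [hh, h1]
  · simp [hh]

end NumberField

theorem stmt5_general (F : Type*) [Field F] [NumberField F]
    (M : Matrix (Fin 3) (Fin 3) F) (hdet : M.det ≠ 0)
    (s : ℕ) (c : F) (hc : c ≠ 0)
    (pi : Fin s → Polynomial F) (e : Fin s → ℕ)
    (hirr : ∀ i, Irreducible (pi i)) (hmonic : ∀ i, (pi i).Monic)
    (hdist : Function.Injective pi)
    (p : Polynomial F)
    (hfact : p = Polynomial.C c * ∏ i, pi i ^ e i)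
    (hodd : ∃ i, Odd (e i)) :
    {w : HeightOneSpectrum (NumberField.RingOfIntegers F) |
      ∃ t : w.adicCompletionIntegers F,
        (∃ m : ℤ, Valued.v (Polynomial.aeval (t : w.adicCompletion F) p) =
          ((ofAdd (2 * m + 1) : Multiplicative ℤ) : WithZero (Multiplicative ℤ))) ∧
        ¬ ∃ b : w.adicCompletion F,
          b ^ 2 = -(Polynomial.aeval (t : w.adicCompletion F) p) *
            (algebraMap F (w.adicCompletion F) M.det) }.Infinite := by
  obtain ⟨i₀, k, hk⟩ := hodd
  obtain ⟨g, u, hu, hgu⟩ := exists_map_eq_C_mul (R := 𝓞 F) (pi i₀)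
  obtain ⟨H, hpGH, a, b, hab⟩ := exists_eq_pow_mul_isCoprime_mul_derivative hc e hirr hmonic hdist
    i₀ (hgu ▸ associated_unit_mul_right (pi i₀) (C u) (isUnit_C.2 hu.isUnit))
  have hg : 0 < g.natDegree := by
    rw [← natDegree_map_eq_of_injective (IsFractionRing.injective (𝓞 F) F), hgu,
      natDegree_C_mul hu]
    exact (hirr i₀).natDegree_pos
  have hcoeff (f : F[X]) := HeightOneSpectrum.eventually_valuation_coeff_le_one (R := 𝓞 F) f
  rw [← frequently_cofinite_iff_infinite]
  refine ((infinite_setOf_exists_eval_mem hg).frequently_cofinite.and_eventually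
    ((hcoeff a).and ((hcoeff b).and ((hcoeff H).and
      (HeightOneSpectrum.eventually_valuation_eq_one hdet))))).mono ?_
  rintro w ⟨⟨t₀, ht₀⟩, ha, hb, hH, hdetw⟩
  obtain ⟨t, hgt, hHt⟩ :=
    HeightOneSpectrum.exists_valuation_eval_eq_exp_neg_one_and_eq_one hab ha hb hH ht₀
  refine HeightOneSpectrum.exists_adicCompletionIntegers_valued_aeval_eq_exp_odd
    (w.valuation_le_one t) (m := -(k + 1)) ?_ hdetw
  rw [hfact, hpGH, eval_mul, eval_pow, eval_map_algebraMap, aeval_algebraMap_apply,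
    coe_aeval_eq_eval, map_mul, map_pow, HeightOneSpectrum.valuation_of_algebraMap, hgt, hHt,
    mul_one, ← exp_nsmul, hk]
  congr 1
  ring

/-- `F` a number field, `q(x,y,z)` a non-degenerate ternary quadratic
form over `F` (Gram matrix `M`), and `p(t) = c·p₁(t)^{e₁}⋯p_s(t)^{e_s}` with
`c ∈ F^×` and the `pᵢ` distinct monic irreducible polynomials.  If some `eᵢ` is
odd, then there are infinitely many finite places `w` of `F` admitting
`t_w ∈ 𝓞_w` such that `w(p(t_w))` is odd and `-p(t_w)·det q` is not a square in
`F_w`.  (A uniformizer has valuation `ofAdd (-1)`, so `w(x)` odd reads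
`Valued.v x = ofAdd (-(2m+1))` for some natural `m`.) -/
theorem stmt5 (F : Type*) [Field F] [NumberField F]
    (M : Matrix (Fin 3) (Fin 3) F) (hsymm : M.IsSymm) (hdet : M.det ≠ 0)
    (s : ℕ) (c : F) (hc : c ≠ 0)
    (pi : Fin s → Polynomial F) (e : Fin s → ℕ)
    (hirr : ∀ i, Irreducible (pi i)) (hmonic : ∀ i, (pi i).Monic)
    (hdist : Function.Injective pi)
    (p : Polynomial F)
    (hfact : p = Polynomial.C c * ∏ i, pi i ^ e i)
    (hodd : ∃ i, Odd (e i)) :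
    {w : HeightOneSpectrum (NumberField.RingOfIntegers F) |
      ∃ t : w.adicCompletionIntegers F,
        (∃ m : ℤ, Valued.v (Polynomial.aeval (t : w.adicCompletion F) p) =
          ((ofAdd (2 * m + 1) : Multiplicative ℤ) : WithZero (Multiplicative ℤ))) ∧
        ¬ ∃ b : w.adicCompletion F,
          b ^ 2 = -(Polynomial.aeval (t : w.adicCompletion F) p) *
            (algebraMap F (w.adicCompletion F) M.det) }.Infinite :=
  stmt5_general F M hdet s c hc pi e hirr hmonic hdist p hfact hodd
end

section
/- There is no quadruple $(x,y,z,t) \in \mathbb{Z}^4$ with $\gcd(x,y,z)=1$ satisfying $x^2 - 2y^2 + 64z^2 = (2t^2+3)^2$. -/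
/-!
Write `w = 2t² + 3`, so that `x² - 2y² = (w - 8z)(w + 8z)`. Since `w - 8z ≡ 3, 5 (mod 8)`, i.e.
`χ₈ (w - 8z) = -1`, some prime `p ≡ ±3 (mod 8)` divides `w - 8z` to an odd power. For such `p`,
`2` is not a square mod `p`, so `p ∣ x² - 2y²` forces `p ∣ x` and `p ∣ y`; hence the `p`-adic
valuation of `x² - 2y²` is even. It would also be odd unless `p ∣ w + 8z`, and then `p` divides
`16z`, hence `z`, contradicting `gcd(x, y, z) = 1`.
-/

open ZMod

theorem ZMod.χ₈_int_eq_neg_one_iff (a : ℤ) : χ₈ a = -1 ↔ a % 8 = 3 ∨ a % 8 = 5 := by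
  rw [χ₈_int_eq_if_mod_eight]
  split_ifs <;> simp <;> omega

theorem ZMod.χ₈_nat_eq_neg_one_iff (n : ℕ) : χ₈ n = -1 ↔ n % 8 = 3 ∨ n % 8 = 5 := by
  rw [χ₈_nat_eq_if_mod_eight]
  split_ifs <;> simp <;> omega

theorem ZMod.χ₈_two_mul_sq_add_three_sub_eight_mul (t z : ℤ) :
    χ₈ ((2 * t ^ 2 + 3 - 8 * z : ℤ) : ZMod 8) = -1 := by
  have key : ∀ s : ZMod 8, χ₈ (2 * s ^ 2 + 3) = -1 := by decide
  push_cast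
  rw [show (8 : ZMod 8) = 0 from rfl, zero_mul, sub_zero]
  exact key t

theorem ZMod.χ₈_nat_eq_prod_factorization {n : ℕ} (hn : n ≠ 0) :
    χ₈ n = n.factorization.prod fun p k => χ₈ p ^ k := by
  conv_lhs => rw [← Nat.prod_factorization_pow_eq_self hn]
  simp only [Finsupp.prod, Nat.cast_prod, Nat.cast_pow, map_prod, map_pow]

theorem exists_prime_χ₈_eq_neg_one_odd_padicValInt {a : ℤ} (ha : χ₈ a = -1) :
    ∃ p : ℕ, p.Prime ∧ χ₈ p = -1 ∧ Odd (padicValInt p a) := by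
  set n := a.natAbs
  have hn : n % 8 = 3 ∨ n % 8 = 5 := by
    have := (χ₈_int_eq_neg_one_iff a).mp ha
    omega
  by_contra! heven
  refine absurd ((χ₈_nat_eq_neg_one_iff n).mpr hn) ?_
  rw [χ₈_nat_eq_prod_factorization (by omega), Finsupp.prod, Finset.prod_eq_one]
  · norm_num
  intro p hp
  have hp' : p.Prime := Nat.prime_of_mem_primeFactors hp
  have hp2 : p % 2 = 1 :=
    Nat.odd_iff.mp ((Nat.odd_iff.mpr (by omega)).of_dvd_nat (Nat.dvd_of_mem_primeFactors hp))
  rw [χ₈_nat_eq_if_mod_eight, if_neg (by omega)]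
  split_ifs with h
  · exact one_pow _
  · have hev : Even (padicValNat p n) :=
      Nat.not_odd_iff_even.mp (heven p hp' ((χ₈_nat_eq_neg_one_iff p).mpr (by omega)))
    rw [Nat.factorization_def n hp', hev.neg_one_pow]

theorem legendreSym_two_eq_neg_one_of_χ₈_eq_neg_one {p : ℕ} [Fact p.Prime] (hp : χ₈ p = -1) :
    legendreSym p 2 = -1 :=
  (legendreSym.at_two (by rintro rfl; exact absurd hp (by decide))).trans hp

theorem even_padicValInt_sq_sub_mul_sq {p : ℕ} [Fact p.Prime] {d : ℤ}
    (hd : legendreSym p d = -1) (x y : ℤ) : Even (padicValInt p (x ^ 2 - d * y ^ 2)) := by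
  rcases eq_or_ne (Int.gcd x y) 0 with hg | hg
  · obtain ⟨rfl, rfl⟩ := Int.gcd_eq_zero_iff.mp hg
    simp
  obtain ⟨g, x', y', hg_pos, hcop, rfl, rfl⟩ := Int.exists_gcd_one' (Nat.pos_of_ne_zero hg)
  have hndvd : ¬ (p : ℤ) ∣ x' ^ 2 - d * y' ^ 2 := fun h =>
    let ⟨hx, hy⟩ := legendreSym.prime_dvd_of_eq_neg_one hd h
    (Nat.prime_iff_prime_int.mp Fact.out).not_isUnit
      ((Int.isCoprime_iff_gcd_eq_one.mpr hcop).isUnit_of_dvd' hx hy)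
  have hg0 : (g : ℤ) ≠ 0 := by positivity
  rw [show (x' * g) ^ 2 - d * (y' * g) ^ 2 = g * g * (x' ^ 2 - d * y' ^ 2) by ring,
    padicValInt.mul (mul_ne_zero hg0 hg0) (fun h0 => hndvd (by simp [h0])),
    padicValInt.mul hg0 hg0, padicValInt.eq_zero_of_not_dvd hndvd, add_zero]
  exact ⟨_, rfl⟩

theorem prime_not_dvd_add_of_dvd_sub {p : ℕ} [hp : Fact p.Prime] (hχp : χ₈ p = -1)
    {x y z w : ℤ} (hgcd : Int.gcd (Int.gcd x y) z = 1)
    (hxy : x ^ 2 - 2 * y ^ 2 = (w - 8 * z) * (w + 8 * z)) (hpa : (p : ℤ) ∣ w - 8 * z) :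
    ¬ (p : ℤ) ∣ w + 8 * z := by
  intro hpb
  have hp16 : IsCoprime (p : ℤ) 16 := by
    have := (χ₈_nat_eq_neg_one_iff p).mp hχp
    exact Nat.isCoprime_iff_coprime.mpr
      ((Nat.coprime_two_right.mpr (Nat.odd_iff.mpr (by omega))).pow_right 4)
  have hpz : (p : ℤ) ∣ z := hp16.dvd_of_dvd_mul_left <| by
    rw [show 16 * z = w + 8 * z - (w - 8 * z) by ring]
    exact dvd_sub hpb hpa
  obtain ⟨hpx, hpy⟩ := legendreSym.prime_dvd_of_eq_neg_one (legendreSym_two_eq_neg_one_of_χ₈_eq_neg_one hχp)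
    (hxy ▸ dvd_mul_of_dvd_left hpa _)
  exact (Nat.prime_iff_prime_int.mp hp.out).not_isUnit
    ((Int.isCoprime_iff_gcd_eq_one.mpr hgcd).isUnit_of_dvd' (Int.dvd_coe_gcd hpx hpy) hpz)

/-- There is no quadruple `(x,y,z,t) ∈ ℤ⁴` with `gcd(x,y,z) = 1`
satisfying `x² - 2y² + 64z² = (2t²+3)²`. -/
theorem stmt6 :
    ¬ ∃ x y z t : ℤ, Int.gcd (Int.gcd x y) z = 1 ∧
      x ^ 2 - 2 * y ^ 2 + 64 * z ^ 2 = (2 * t ^ 2 + 3) ^ 2 := by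
  rintro ⟨x, y, z, t, hgcd, heq⟩
  set w := 2 * t ^ 2 + 3
  have hxy : x ^ 2 - 2 * y ^ 2 = (w - 8 * z) * (w + 8 * z) := by linear_combination heq
  obtain ⟨p, hp, hχp, hodd⟩ := exists_prime_χ₈_eq_neg_one_odd_padicValInt (a := w - 8 * z)
    (χ₈_two_mul_sq_add_three_sub_eight_mul t z)
  have := Fact.mk hp
  have hpa : (p : ℤ) ∣ w - 8 * z := by
    by_contra h
    simp [padicValInt.eq_zero_of_not_dvd h] at hodd
  have hpb := prime_not_dvd_add_of_dvd_sub hχp hgcd hxy hpa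
  have heven := even_padicValInt_sq_sub_mul_sq (legendreSym_two_eq_neg_one_of_χ₈_eq_neg_one hχp) x y
  rw [hxy, padicValInt.mul (by rintro h; simp [h] at hodd) (fun h => hpb (by simp [h])),
    padicValInt.eq_zero_of_not_dvd hpb, add_zero] at heven
  exact Nat.not_even_iff_odd.mpr hodd heven
end

section
/- For every prime $p$ and also over $\mathbb{R}$, there exists a solution $(x,y,z,t) \in \mathbb{Z}_p^4$ (respectively $\mathbb{R}^4$) of $x^2 - 2y^2 + 64z^2 = (2t^2+3)^2$ with at least one of $x,y,z$ a unit in $\mathbb{Z}_p$ (respectively with $(x,y,z) \neq (0,0,0)$). -/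
lemma unit_of_not_dvd {p : ℕ} [Fact p.Prime] (n : ℤ) (h : ¬ (p : ℤ) ∣ n) :
    IsUnit ((n : ℤ) : ℤ_[p]) := by
  rw [PadicInt.isUnit_iff]
  have h1 := PadicInt.norm_le_one ((n : ℤ) : ℤ_[p])
  have h2 : ¬ ‖((n : ℤ) : ℤ_[p])‖ < 1 := by
    rw [PadicInt.norm_int_lt_one_iff_dvd]; exact h
  exact le_antisymm h1 (not_lt.mp h2)

/-- For every prime `p` the equation `x² - 2y² + 64z² = (2t²+3)²`
has a solution in `ℤ_p⁴` with at least one of `x,y,z` a unit of `ℤ_p`, and it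
has a real solution with `(x,y,z) ≠ (0,0,0)`. -/
theorem stmt7 :
    (∀ (p : ℕ) [Fact p.Prime],
      ∃ x y z t : ℤ_[p],
        x ^ 2 - 2 * y ^ 2 + 64 * z ^ 2 = (2 * t ^ 2 + 3) ^ 2 ∧
        (IsUnit x ∨ IsUnit y ∨ IsUnit z)) ∧
    (∃ x y z t : ℝ,
      x ^ 2 - 2 * y ^ 2 + 64 * z ^ 2 = (2 * t ^ 2 + 3) ^ 2 ∧
      (x, y, z) ≠ (0, 0, 0)) := by
  constructor
  · intro p hp
    by_cases h3 : p = 3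
    · subst h3
      have h2 : IsUnit ((2 : ℤ) : ℤ_[3]) := by
        apply unit_of_not_dvd; decide
      obtain ⟨u, hu⟩ := h2
      refine ⟨1, 2, ↑u⁻¹, 0, ?_, Or.inl isUnit_one⟩
      have hinv : ((2 : ℤ) : ℤ_[3]) * ↑u⁻¹ = 1 := by
        rw [← hu]; exact u.mul_inv
      push_cast at hinv
      have : (64 : ℤ_[3]) * (↑u⁻¹ : ℤ_[3]) ^ 2 = 16 * ((2 : ℤ_[3]) * ↑u⁻¹) ^ 2 := by ring
      rw [this, hinv]
      norm_num
    · refine ⟨3, 0, 0, 0, by norm_num, Or.inl ?_⟩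
      have := unit_of_not_dvd (p := p) 3 ?_
      · simpa using this
      · intro hd
        have hd3 : p ∣ 3 := Int.ofNat_dvd.mp (by exact_mod_cast hd)
        exact h3 ((Nat.prime_dvd_prime_iff_eq hp.out (by norm_num)).mp hd3)
  · exact ⟨3, 0, 0, 0, by norm_num, by simp⟩
end

section
/- The equation $-9x^2 + 2xy + 7y^2 + 2z^2 = (2t^2-1)^2$ has no solution $(x,y,z,t) \in \mathbb{Z}^4$. -/
/-- Mod 32 computation: if `9V² + e = 2Z² - (2T²-1)²` with `e ∈ {0,16}`,
then `V mod 8 ∈ {3,5}`. -/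
lemma rhs_vals : ∀ Z T : ZMod 32,
    2 * Z ^ 2 - (2 * T ^ 2 - 1) ^ 2 = 1 ∨ 2 * Z ^ 2 - (2 * T ^ 2 - 1) ^ 2 = 7 ∨
    2 * Z ^ 2 - (2 * T ^ 2 - 1) ^ 2 = 15 ∨ 2 * Z ^ 2 - (2 * T ^ 2 - 1) ^ 2 = 17 ∨
    2 * Z ^ 2 - (2 * T ^ 2 - 1) ^ 2 = 23 ∨ 2 * Z ^ 2 - (2 * T ^ 2 - 1) ^ 2 = 31 := by
  decide

lemma lhs_vals : ∀ V w : ZMod 32,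
    (9 * V ^ 2 + 16 * w = 1 ∨ 9 * V ^ 2 + 16 * w = 7 ∨
     9 * V ^ 2 + 16 * w = 15 ∨ 9 * V ^ 2 + 16 * w = 17 ∨
     9 * V ^ 2 + 16 * w = 23 ∨ 9 * V ^ 2 + 16 * w = 31) →
    V.val % 8 = 3 ∨ V.val % 8 = 5 := by decide

/-- If `p` is an odd prime dividing `2z² - (2t²-1)²`, then 2 is a square mod `p`. -/
lemma two_is_square (p : ℕ) [hp : Fact p.Prime] (hp2 : p ≠ 2) (z t : ℤ)
    (h : (p : ℤ) ∣ 2 * z ^ 2 - (2 * t ^ 2 - 1) ^ 2) : IsSquare (2 : ZMod p) := by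
  have h' : ((2 * z ^ 2 - (2 * t ^ 2 - 1) ^ 2 : ℤ) : ZMod p) = 0 :=
    (ZMod.intCast_zmod_eq_zero_iff_dvd _ _).mpr h
  push_cast at h'
  set Z : ZMod p := (z : ZMod p)
  set T : ZMod p := (t : ZMod p)
  have key : 2 * Z ^ 2 = (2 * T ^ 2 - 1) ^ 2 := by linear_combination h'
  by_cases hZ : Z = 0
  · -- then 2T² = 1, so (2T)² = 2
    have h1 : (2 * T ^ 2 - 1) ^ 2 = 0 := by rw [← key, hZ]; ring
    have h2 : 2 * T ^ 2 - 1 = 0 := sq_eq_zero_iff.mp h1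
    refine ⟨2 * T, ?_⟩
    linear_combination (-2 : ZMod p) * h2
  · refine ⟨(2 * T ^ 2 - 1) * Z⁻¹, ?_⟩
    have hinv : Z * Z⁻¹ = 1 := ZMod.mul_inv_of_unit Z (Ne.isUnit hZ)
    calc (2 : ZMod p) = 2 * Z ^ 2 * Z⁻¹ ^ 2 := by
          linear_combination (-2 * (Z * Z⁻¹ + 1)) * hinv
      _ = (2 * T ^ 2 - 1) * Z⁻¹ * ((2 * T ^ 2 - 1) * Z⁻¹) := by
          rw [key]; ring

/-- A nonzero natural all of whose prime factors are `±1 mod 8` is `±1 mod 8`. -/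
lemma prod_mod8 : ∀ m : ℕ, m ≠ 0 →
    (∀ p : ℕ, p.Prime → p ∣ m → p % 8 = 1 ∨ p % 8 = 7) →
    m % 8 = 1 ∨ m % 8 = 7 := by
  intro m
  induction m using Nat.strong_induction_on with
  | _ m ih =>
    intro hm h
    rcases eq_or_ne m 1 with rfl | hm1
    · left; rfl
    · have hp : m.minFac.Prime := Nat.minFac_prime hm1
      obtain ⟨k, hk⟩ := Nat.minFac_dvd m
      have hk0 : k ≠ 0 := by rintro rfl; simp at hk; exact hm hk
      have hklt : k < m := by
        have := hp.two_le
        calc k < 2 * k := by omega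
          _ ≤ m.minFac * k := Nat.mul_le_mul_right k this
          _ = m := hk.symm
      have hkmod := ih k hklt hk0
        (fun p hpp hpd => h p hpp ((hpd.mul_left _).trans hk.symm.dvd))
      have hpmod := h m.minFac hp (Nat.minFac_dvd m)
      rw [hk, Nat.mul_mod]
      rcases hpmod with h1 | h1 <;> rcases hkmod with h2 | h2 <;> rw [h1, h2] <;> simp

/-- The equation `-9x² + 2xy + 7y² + 2z² = (2t²-1)²` has no
solution in `ℤ⁴`. -/
theorem stmt8 :
    ¬ ∃ x y z t : ℤ,
      -9 * x ^ 2 + 2 * x * y + 7 * y ^ 2 + 2 * z ^ 2 = (2 * t ^ 2 - 1) ^ 2 := by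
  rintro ⟨x, y, z, t, heq⟩
  set v : ℤ := x - y with hv
  -- factorization: 2z² - (2t²-1)² = (9x+7y)(x-y) = (9v + 16y) v = 9v² + 16(y·v)
  have hfac : 2 * z ^ 2 - (2 * t ^ 2 - 1) ^ 2 = 9 * v ^ 2 + 16 * (y * v) := by
    rw [hv]; linear_combination heq
  -- Step 1: v % 8 = 3 or 5, via mod 32
  have hv8 : v % 8 = 3 ∨ v % 8 = 5 := by
    have hc : ((9 * v ^ 2 + 16 * (y * v) : ℤ) : ZMod 32)
        = ((2 * z ^ 2 - (2 * t ^ 2 - 1) ^ 2 : ℤ) : ZMod 32) := by rw [hfac]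
    push_cast at hc
    have hkey : ((v : ZMod 32)).val % 8 = 3 ∨ ((v : ZMod 32)).val % 8 = 5 :=
      lhs_vals (v : ZMod 32) ((y : ZMod 32) * (v : ZMod 32))
        (by rw [hc]; exact rhs_vals (z : ZMod 32) (t : ZMod 32))
    have hval : (((v : ZMod 32)).val : ℤ) = v % 32 := ZMod.val_intCast v
    omega
  -- Step 2: every prime factor of v.natAbs is ±1 mod 8
  have hvdvd : v ∣ 2 * z ^ 2 - (2 * t ^ 2 - 1) ^ 2 :=
    ⟨9 * v + 16 * y, by rw [hfac]; ring⟩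
  have hstep2 : ∀ p : ℕ, p.Prime → p ∣ v.natAbs → p % 8 = 1 ∨ p % 8 = 7 := by
    intro p hpp hpd
    have hpv : (p : ℤ) ∣ v := by
      have h1 : (p : ℤ) ∣ (v.natAbs : ℤ) := Int.natCast_dvd_natCast.mpr hpd
      rcases Int.natAbs_eq v with h | h
      · rwa [← h] at h1
      · rw [h]; exact dvd_neg.mpr h1
    have hpn : (p : ℤ) ∣ 2 * z ^ 2 - (2 * t ^ 2 - 1) ^ 2 := hpv.trans hvdvd
    have hp2 : p ≠ 2 := by
      rintro rfl
      have : (2 : ℤ) ∣ v := by exact_mod_cast hpv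
      omega
    haveI : Fact p.Prime := ⟨hpp⟩
    exact (ZMod.exists_sq_eq_two_iff hp2).mp (two_is_square p hp2 z t hpn)
  -- Step 3: so v.natAbs % 8 = 1 or 7, contradiction
  have hv0 : v.natAbs ≠ 0 := fun h => by
    have : v = 0 := Int.natAbs_eq_zero.mp h
    omega
  have hfin := prod_mod8 v.natAbs hv0 hstep2
  rcases Int.natAbs_eq v with h | h <;> omega
end

section
/- For every prime $p$ and also over $\mathbb{R}$, the equation $-9x^2+2xy+7y^2+2z^2 = (2t^2-1)^2$ has a solution in $\mathbb{Z}_p^4$ (respectively in $\mathbb{R}^4$) with at least one of $x,y,z$ a unit in $\mathbb{Z}_p$ (respectively $(x,y,z)\neq(0,0,0)$). -/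
/-! Take `t = 0`. Clearing denominators, it suffices to find an integer point `(a, b, c, n)` of
`-9a² + 2ab + 7b² + 2c² = n²` with `p ∤ n` and `p ∤ gcd(a, b, c)`: then `(a/n, b/n, c/n, 0)` is a
`p`-adic solution with a unit coordinate. The points `(-3, 5, 0, 8)` and `(-5, 4, 9, 3)` cover
`p = 3` and `p ≠ 3` respectively, and the second also gives the real solution. -/

namespace PadicInt

variable {p : ℕ} [Fact p.Prime]

theorem isUnit_intCast_iff (k : ℤ) : IsUnit (k : ℤ_[p]) ↔ ¬ (p : ℤ) ∣ k := by
  rw [← norm_int_lt_one_iff_dvd, ← not_isUnit_iff, not_not]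

theorem exists_solution_of_int {a b c n : ℤ}
    (h : -9 * a ^ 2 + 2 * a * b + 7 * b ^ 2 + 2 * c ^ 2 = n ^ 2) (hn : ¬ (p : ℤ) ∣ n)
    (habc : ¬ (p : ℤ) ∣ a ∨ ¬ (p : ℤ) ∣ b ∨ ¬ (p : ℤ) ∣ c) :
    ∃ x y z t : ℤ_[p],
      -9 * x ^ 2 + 2 * x * y + 7 * y ^ 2 + 2 * z ^ 2 = (2 * t ^ 2 - 1) ^ 2 ∧
      (IsUnit x ∨ IsUnit y ∨ IsUnit z) := by
  obtain ⟨u, hu⟩ := isUnit_iff_exists_inv.mp ((isUnit_intCast_iff n).mpr hn)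
  have hu_unit : IsUnit u := IsUnit.of_mul_eq_one_right _ hu
  have h' : -9 * (a : ℤ_[p]) ^ 2 + 2 * a * b + 7 * b ^ 2 + 2 * c ^ 2 = n ^ 2 := by
    exact_mod_cast h
  refine ⟨a * u, b * u, c * u, 0, ?_, ?_⟩
  · linear_combination u ^ 2 * h' + (n * u + 1) * hu
  · simp only [← isUnit_intCast_iff] at habc
    rcases habc with ha | hb | hc
    exacts [.inl (ha.mul hu_unit), .inr (.inl (hb.mul hu_unit)), .inr (.inr (hc.mul hu_unit))]

end PadicInt

/-- For every prime `p` the equation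
`-9x² + 2xy + 7y² + 2z² = (2t²-1)²` has a solution in `ℤ_p⁴` with at least one
of `x,y,z` a unit of `ℤ_p`, and it has a real solution with `(x,y,z) ≠ (0,0,0)`. -/
theorem stmt9 :
    (∀ (p : ℕ) [Fact p.Prime],
      ∃ x y z t : ℤ_[p],
        -9 * x ^ 2 + 2 * x * y + 7 * y ^ 2 + 2 * z ^ 2 = (2 * t ^ 2 - 1) ^ 2 ∧
        (IsUnit x ∨ IsUnit y ∨ IsUnit z)) ∧
    (∃ x y z t : ℝ,
      -9 * x ^ 2 + 2 * x * y + 7 * y ^ 2 + 2 * z ^ 2 = (2 * t ^ 2 - 1) ^ 2 ∧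
      (x, y, z) ≠ (0, 0, 0)) := by
  refine ⟨fun p hp => ?_, ⟨-5 / 3, 4 / 3, 3, 0, by norm_num, by simp⟩⟩
  by_cases h3 : p = 3
  · subst h3
    exact PadicInt.exists_solution_of_int (a := -3) (b := 5) (c := 0) (n := 8)
      (by norm_num) (by decide) (.inr (.inl (by decide)))
  · have hp3 : ¬ (p : ℤ) ∣ 3 := fun hd =>
      h3 <| (Nat.prime_dvd_prime_iff_eq hp.out Nat.prime_three).mp (by exact_mod_cast hd)
    exact PadicInt.exists_solution_of_int (a := -5) (b := 4) (c := 9) (n := 3)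
      (by norm_num) hp3 (.inr (.inr fun h9 =>
        hp3 ((Nat.prime_iff_prime_int.mp hp.out).dvd_of_dvd_pow (n := 2) h9)))
end

section
/- Let $(x,y,z,t) \in \mathbb{Z}_2^4$ satisfy $-9x^2+2xy+7y^2+2z^2=(2t^2-1)^2$. Then both $y-x$ and $9x+7y$ are $2$-adic units, and it is impossible that $y-x \equiv 1 \pmod 4$ and $9x+7y \equiv 1 \pmod 4$ simultaneously; consequently $y-x$ is not a norm from $\mathbb{Q}_2(\sqrt{2})$ or $9x+7y$ is not. -/
private lemma zmod16_t : ∀ T : ZMod (2^4), (2*T^2-1)^2 = 1 := by decide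

private lemma zmod16_key : ∀ X Y Z : ZMod (2^4),
    (Y - X) * (9*X + 7*Y) = 1 - 2*Z^2 →
    ((Y-X = 3 ∨ Y-X = 5 ∨ Y-X = 11 ∨ Y-X = 13) ∧
     (9*X+7*Y = 3 ∨ 9*X+7*Y = 5 ∨ 9*X+7*Y = 11 ∨ 9*X+7*Y = 13)) := by decide

private lemma zmod_cast35 : ∀ A : ZMod (2^4), (A = 3 ∨ A = 5 ∨ A = 11 ∨ A = 13) →
    ((ZMod.cast A : ZMod (2^3)) = 3 ∨ (ZMod.cast A : ZMod (2^3)) = 5) := by decide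

private lemma zmod_cast_ne : ∀ A : ZMod (2^3), (A = 3 ∨ A = 5) →
    (ZMod.cast A : ZMod (2^1)) ≠ 0 := by decide

private lemma zmod2_sq : ∀ a : ZMod (2^1), a^2 = 0 → a = 0 := by decide
private lemma zmod8_sq : ∀ a b : ZMod (2^3), a^2-2*b^2 ≠ 3 ∧ a^2-2*b^2 ≠ 5 := by decide

private lemma pZ2_two_ne_zero : (2:ℤ_[2]) ≠ 0 := by
  have := (PadicInt.prime_p (p := 2)).ne_zero
  simpa using this

private lemma dvd_iff_toZModPow (n : ℕ) (w : ℤ_[2]) :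
    (2:ℤ_[2])^n ∣ w ↔ PadicInt.toZModPow n w = 0 := by
  rw [← RingHom.mem_ker, PadicInt.ker_toZModPow, Ideal.mem_span_singleton]
  norm_num

private lemma unit_of_mod2 (w : ℤ_[2]) (hw : PadicInt.toZModPow 1 w ≠ 0) : IsUnit w := by
  by_contra hu
  have h1 : ‖w‖ < 1 := PadicInt.not_isUnit_iff.mp hu
  have h2 : ((2:ℕ):ℤ_[2]) ∣ w := (PadicInt.norm_lt_one_iff_dvd w).mp h1
  apply hw
  have h3 : (2:ℤ_[2])^1 ∣ w := by simpa using h2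
  exact (dvd_iff_toZModPow 1 w).mp h3

private lemma exists_den (a : ℚ_[2]) : ∃ (n:ℕ) (α : ℤ_[2]), (α : ℚ_[2]) = a * 2^n := by
  obtain ⟨n, hn⟩ := pow_unbounded_of_one_lt ‖a‖ (by norm_num : (1:ℝ) < 2)
  have hnorm : ‖a * (2:ℚ_[2])^n‖ ≤ 1 := by
    have h2 : ‖(2:ℚ_[2])‖ = (2:ℝ)⁻¹ := by
      simpa using @Padic.norm_p 2 ⟨Nat.prime_two⟩
    rw [_root_.norm_mul, _root_.norm_pow, h2, inv_pow,
      mul_inv_le_iff₀ (by positivity), one_mul]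
    exact hn.le
  exact ⟨n, ⟨a * 2^n, hnorm⟩, rfl⟩

private lemma descent : ∀ (n : ℕ) (c A B : ℤ_[2]),
    (PadicInt.toZModPow 3 c = 3 ∨ PadicInt.toZModPow 3 c = 5) →
    A^2 - 2*B^2 = c * 2^(2*n) → False := by
  intro n
  induction n with
  | zero =>
    intro c A B hc heq
    have h8 : (PadicInt.toZModPow 3 A)^2 - 2*(PadicInt.toZModPow 3 B)^2
        = PadicInt.toZModPow 3 c := by
      have := congrArg (PadicInt.toZModPow 3) heq
      simpa only [map_sub, map_mul, map_pow, map_ofNat, Nat.mul_zero, pow_zero,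
        mul_one] using this
    rcases hc with hc | hc <;> rw [hc] at h8
    · exact (zmod8_sq _ _).1 h8
    · exact (zmod8_sq _ _).2 h8
  | succ n ih =>
    intro c A B hc heq
    have h2z : (2 : ZMod (2^1)) = 0 := by decide
    have hA2 : PadicInt.toZModPow 1 A = 0 := by
      apply zmod2_sq
      have := congrArg (PadicInt.toZModPow 1) heq
      simp only [map_sub, map_mul, map_pow, map_ofNat] at this
      rwa [h2z, zero_pow (show 2*(n+1) ≠ 0 by omega), mul_zero, zero_mul,
        sub_zero] at this
    obtain ⟨A', hA'⟩ : (2:ℤ_[2]) ∣ A := by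
      rw [← pow_one (2:ℤ_[2]), dvd_iff_toZModPow]; exact hA2
    have e1 : (2:ℤ_[2])^(2*(n+1)) = 2 * 2^(2*n+1) := by
      rw [show 2*(n+1) = (2*n+1)+1 from by ring, pow_succ]; ring
    have heq2 : 2*A'^2 - B^2 = c * 2^(2*n+1) := by
      rw [hA', e1] at heq
      apply mul_left_cancel₀ pZ2_two_ne_zero
      linear_combination heq
    have hB2 : PadicInt.toZModPow 1 B = 0 := by
      apply zmod2_sq
      have := congrArg (PadicInt.toZModPow 1) heq2
      simp only [map_sub, map_mul, map_pow, map_ofNat] at this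
      rw [h2z, zero_pow (show 2*n+1 ≠ 0 by omega), mul_zero, zero_mul,
        zero_sub, neg_eq_zero] at this
      exact this
    obtain ⟨B', hB'⟩ : (2:ℤ_[2]) ∣ B := by
      rw [← pow_one (2:ℤ_[2]), dvd_iff_toZModPow]; exact hB2
    have e2 : (2:ℤ_[2])^(2*n+1) = 2 * 2^(2*n) := by rw [pow_succ]; ring
    have heq3 : A'^2 - 2*B'^2 = c * 2^(2*n) := by
      rw [hB', e2] at heq2
      apply mul_left_cancel₀ pZ2_two_ne_zero
      linear_combination heq2
    exact ih c A' B' hc heq3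

private lemma no_rep (c : ℤ_[2])
    (hc : PadicInt.toZModPow 3 c = 3 ∨ PadicInt.toZModPow 3 c = 5) :
    ¬ ∃ a b : ℚ_[2], ((c : ℤ_[2]) : ℚ_[2]) = a ^ 2 - 2 * b ^ 2 := by
  rintro ⟨a, b, hab⟩
  obtain ⟨m, α, hα⟩ := exists_den a
  obtain ⟨k, β, hβ⟩ := exists_den b
  apply descent (m+k) c (α * 2^k) (β * 2^m) hc
  have two : ((2:ℤ_[2]):ℚ_[2]) = 2 := rfl
  apply Subtype.coe_injective
  push_cast [two]
  rw [hα, hβ, hab]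
  ring

/-- If `(x,y,z,t) ∈ ℤ₂⁴` satisfies
`-9x² + 2xy + 7y² + 2z² = (2t²-1)²` then `y-x` and `9x+7y` are 2-adic units, one
cannot have both `y-x ≡ 1 (mod 4)` and `9x+7y ≡ 1 (mod 4)`, and consequently
`y-x` is not a norm from `ℚ₂(√2)` or `9x+7y` is not (the norm form of `ℚ₂(√2)`
being `a² - 2b²`). -/
theorem stmt10 (x y z t : ℤ_[2])
    (h : -9 * x ^ 2 + 2 * x * y + 7 * y ^ 2 + 2 * z ^ 2 = (2 * t ^ 2 - 1) ^ 2) :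
    IsUnit (y - x) ∧ IsUnit (9 * x + 7 * y) ∧
    ¬ ((4 : ℤ_[2]) ∣ (y - x - 1) ∧ (4 : ℤ_[2]) ∣ (9 * x + 7 * y - 1)) ∧
    ((¬ ∃ a b : ℚ_[2], ((y - x : ℤ_[2]) : ℚ_[2]) = a ^ 2 - 2 * b ^ 2) ∨
     (¬ ∃ a b : ℚ_[2], ((9 * x + 7 * y : ℤ_[2]) : ℚ_[2]) = a ^ 2 - 2 * b ^ 2)) := by
  have key : (y - x) * (9*x + 7*y) = (2*t^2-1)^2 - 2*z^2 := by linear_combination h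
  have h16 := congrArg (PadicInt.toZModPow 4) key
  simp only [map_mul, map_sub, map_add, map_pow, map_ofNat, map_one] at h16
  rw [zmod16_t] at h16
  have hmem := zmod16_key _ _ _ h16
  have hyx8 : PadicInt.toZModPow 3 (y - x) = 3 ∨ PadicInt.toZModPow 3 (y - x) = 5 := by
    have := zmod_cast35 _ hmem.1
    rwa [show (PadicInt.toZModPow 4) y - (PadicInt.toZModPow 4) x
        = PadicInt.toZModPow 4 (y - x) from (map_sub _ _ _).symm,
      PadicInt.cast_toZModPow 3 4 (by norm_num)] at this
  have hxy8 : PadicInt.toZModPow 3 (9*x + 7*y) = 3 ∨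
      PadicInt.toZModPow 3 (9*x + 7*y) = 5 := by
    have := zmod_cast35 _ hmem.2
    rwa [show 9 * (PadicInt.toZModPow 4) x + 7 * (PadicInt.toZModPow 4) y
        = PadicInt.toZModPow 4 (9*x + 7*y) from by simp [map_add, map_mul, map_ofNat],
      PadicInt.cast_toZModPow 3 4 (by norm_num)] at this
  have hyx2 : PadicInt.toZModPow 1 (y - x) ≠ 0 := by
    have := zmod_cast_ne _ hyx8
    rwa [PadicInt.cast_toZModPow 1 3 (by norm_num)] at this
  have hxy2 : PadicInt.toZModPow 1 (9*x + 7*y) ≠ 0 := by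
    have := zmod_cast_ne _ hxy8
    rwa [PadicInt.cast_toZModPow 1 3 (by norm_num)] at this
  refine ⟨unit_of_mod2 _ hyx2, unit_of_mod2 _ hxy2, ?_, Or.inl (no_rep _ hyx8)⟩
  rintro ⟨⟨k1, hk1⟩, ⟨k2, hk2⟩⟩
  have hodd : (1:ℤ_[2]) = 4*x+4*y-2*k1-2*k2 := by
    apply mul_left_cancel₀ pZ2_two_ne_zero
    linear_combination -hk1 - hk2
  have h1 := congrArg (PadicInt.toZModPow 1) hodd
  simp only [map_sub, map_add, map_mul, map_ofNat, map_one] at h1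
  rw [show (2:ZMod (2^1)) = 0 from by decide, show (4:ZMod (2^1)) = 0 from by decide] at h1
  simp at h1
end

section
/- Let $k$ be a local field (a finite extension of $\mathbb{Q}_p$ or $\mathbb{R}$), $q(x_1,\dots,x_n)$ a non-degenerate quadratic form over $k$, $p(t) \in k[t]$ nonzero, and let $\alpha \in k$ be a root of $p$ of odd order $r$. Then the singular point $(0,\dots,0,\alpha)$ of the hypersurface $q(x_1,\dots,x_n)=p(t)$ is a limit of smooth $k$-points of the hypersurface. -/
/-!
Pick `x₀` with `c := x₀ ⬝ᵥ M *ᵥ x₀ ≠ 0`. Points `(s • x₀, t)` with `s ≠ 0` are smooth because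
`M *ᵥ x₀ ≠ 0`, and lie on the hypersurface iff `c s² = p t`. Write `p = (t - α)^(2m+1) p₀` with
`b := p₀ α ≠ 0`. Along `t = α + c b u²` the equation becomes `s² = ((c b)^m u^(2m+1))² · b p₀ t`,
and `b p₀ t` is close to `b²`, hence a square by the inverse function theorem. Letting `u → 0`
gives smooth points tending to `(0, α)`.
-/

open Filter Polynomial Topology Matrix

theorem Matrix.exists_dotProduct_mulVec_self_ne_zero {R ι : Type*} [CommRing R] [Fintype ι]
    [DecidableEq ι] [Invertible (2 : R)] {M : Matrix ι ι R} (hM : M ≠ 0) (hsymm : M.IsSymm) :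
    ∃ x, x ⬝ᵥ M *ᵥ x ≠ 0 := by
  obtain ⟨x, hx⟩ := LinearMap.BilinForm.exists_bilinForm_self_ne_zero
    ((LinearEquiv.map_ne_zero_iff Matrix.toBilin').2 hM)
    (LinearMap.BilinForm.isSymm_iff.1 (Matrix.isSymm_toBilin'_iff_isSymm.2 hsymm))
  exact ⟨x, by rwa [Matrix.toBilin'_apply'] at hx⟩

theorem Polynomial.exists_eval_eq_pow_rootMultiplicity_mul {R : Type*} [CommRing R] {p : R[X]}
    (hp : p ≠ 0) (a : R) :
    ∃ p₀ : R[X], p₀.eval a ≠ 0 ∧ ∀ t, p.eval t = (t - a) ^ p.rootMultiplicity a * p₀.eval t := by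
  refine ⟨_, eval_divByMonic_pow_rootMultiplicity_ne_zero a hp, fun t ↦ ?_⟩
  conv_lhs => rw [← p.pow_mul_divByMonic_rootMultiplicity_eq a]
  simp

theorem exists_continuousAt_sqrt {k : Type*} [NontriviallyNormedField k] [CompleteSpace k]
    [NeZero (2 : k)] {b : k} (hb : b ≠ 0) :
    ∃ w : k → k, w (b ^ 2) = b ∧ ContinuousAt w (b ^ 2) ∧ ∀ᶠ z in 𝓝 (b ^ 2), w z ^ 2 = z := by
  have hsq : HasStrictDerivAt (fun z : k ↦ z ^ 2) (2 * b) b := by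
    simpa using hasStrictDerivAt_pow 2 b
  have h2b : 2 * b ≠ 0 := mul_ne_zero two_ne_zero hb
  have hequiv := hsq.hasStrictFDerivAt_equiv h2b
  exact ⟨hsq.localInverse _ _ _ h2b, hequiv.localInverse_apply_image,
    hequiv.localInverse_continuousAt, hequiv.eventually_right_inverse⟩

theorem Polynomial.mem_closure_setOf_mul_sq_eq_eval {k : Type*} [NontriviallyNormedField k]
    [CompleteSpace k] [NeZero (2 : k)] {p : k[X]} (hp : p ≠ 0) {α : k}
    (hodd : Odd (p.rootMultiplicity α)) {c : k} (hc : c ≠ 0) :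
    ((0 : k), α) ∈ closure {P : k × k | P.1 ≠ 0 ∧ c * P.1 ^ 2 = p.eval P.2} := by
  obtain ⟨p₀, hb, hfac⟩ := exists_eval_eq_pow_rootMultiplicity_mul hp α
  obtain ⟨m, hm⟩ := hodd
  set b := p₀.eval α
  obtain ⟨w, hwb, hwc, hw⟩ := exists_continuousAt_sqrt hb
  set t : k → k := fun u ↦ α + c * b * u ^ 2
  set σ : k → k := fun u ↦ w (b * p₀.eval (t u))
  set s : k → k := fun u ↦ (c * b) ^ m * u ^ (2 * m + 1) * σ u
  have ht : Tendsto t (𝓝 0) (𝓝 α) := (by fun_prop : Continuous t).tendsto' 0 α (by simp [t])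
  have hy : Tendsto (fun u ↦ b * p₀.eval (t u)) (𝓝 0) (𝓝 (b ^ 2)) :=
    (by fun_prop : Continuous _).tendsto' 0 _ (by simp [t, b, sq])
  have hσ : Tendsto σ (𝓝 0) (𝓝 b) := hwb ▸ hwc.tendsto.comp hy
  have hpow : Tendsto (fun u : k ↦ (c * b) ^ m * u ^ (2 * m + 1)) (𝓝 0) (𝓝 0) :=
    (by fun_prop : Continuous _).tendsto' 0 0 (by simp)
  have hs : Tendsto s (𝓝 0) (𝓝 0) := by simpa using hpow.mul hσ
  refine mem_closure_of_tendsto (b := 𝓝[≠] 0)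
    ((hs.prodMk_nhds ht).mono_left nhdsWithin_le_nhds) ?_
  filter_upwards [nhdsWithin_le_nhds (hy.eventually hw), nhdsWithin_le_nhds (hσ.eventually_ne hb),
    self_mem_nhdsWithin] with u hσsq hσ0 (hu : u ≠ 0)
  refine ⟨by simp [s, hc, hb, hu, hσ0], ?_⟩
  rw [hfac, hm]
  simp only [t, s, add_sub_cancel_left] at hσsq ⊢
  linear_combination (c * (c * b) ^ (2 * m) * u ^ (2 * (2 * m + 1))) * hσsq

theorem stmt13_general (k : Type*) [NontriviallyNormedField k] [CompleteSpace k]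
    [CharZero k]
    (n : ℕ) (hn : 1 ≤ n)
    (M : Matrix (Fin n) (Fin n) k) (hsymm : M.IsSymm) (hdet : M.det ≠ 0)
    (p : Polynomial k) (hp : p ≠ 0)
    (α : k) (r : ℕ) (hr : p.rootMultiplicity α = r) (hodd : Odd r) :
    ((0, α) : (Fin n → k) × k) ∈
      closure {P : (Fin n → k) × k |
        dotProduct P.1 (M.mulVec P.1) = p.eval P.2 ∧
        ¬ (M.mulVec P.1 = 0 ∧ p.derivative.eval P.2 = 0)} := by
  have : Nonempty (Fin n) := ⟨⟨0, hn⟩⟩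
  have : Invertible (2 : k) := invertibleOfNonzero two_ne_zero
  obtain ⟨x₀, hx₀⟩ := M.exists_dotProduct_mulVec_self_ne_zero (fun h ↦ hdet (h ▸ det_zero)) hsymm
  have hMx₀ : M *ᵥ x₀ ≠ 0 := fun h ↦ hx₀ (by simp [h])
  suffices ((0 : k) • x₀, α) ∈ closure _ by rwa [zero_smul] at this
  refine map_mem_closure (f := fun P : k × k ↦ (P.1 • x₀, P.2)) (by fun_prop)
    (mem_closure_setOf_mul_sq_eq_eval hp (hr ▸ hodd) hx₀) ?_
  rintro ⟨s, t⟩ ⟨hs, hst⟩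
  refine ⟨?_, fun h ↦ hMx₀ ?_⟩
  · simp only [mulVec_smul, smul_dotProduct, dotProduct_smul, smul_eq_mul, ← hst]
    ring
  · simpa [mulVec_smul, hs] using h.1

/-- `k` a local field (a complete, locally compact nontrivially
normed field of characteristic zero), `q` a non-degenerate quadratic form over
`k` (Gram matrix `M`, `q x = xᵀ M x`, gradient `2 M x`), `p ∈ k[t]` nonzero, and
`α ∈ k` a root of `p` of odd order `r`.  Then the singular point `(0,…,0,α)` of
the hypersurface `q(x) = p(t)` is a limit of smooth `k`-points, i.e. it lies in
the closure of the smooth locus of `X(k)`. -/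
theorem stmt13 (k : Type*) [NontriviallyNormedField k] [CompleteSpace k]
    [LocallyCompactSpace k] [CharZero k]
    (n : ℕ) (hn : 1 ≤ n)
    (M : Matrix (Fin n) (Fin n) k) (hsymm : M.IsSymm) (hdet : M.det ≠ 0)
    (p : Polynomial k) (hp : p ≠ 0)
    (α : k) (r : ℕ) (hr : p.rootMultiplicity α = r) (hodd : Odd r)
    (hroot : p.eval α = 0) :
    ((0, α) : (Fin n → k) × k) ∈
      closure {P : (Fin n → k) × k |
        dotProduct P.1 (M.mulVec P.1) = p.eval P.2 ∧
        ¬ (M.mulVec P.1 = 0 ∧ p.derivative.eval P.2 = 0)} :=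
  stmt13_general k n hn M hsymm hdet p hp α r hr hodd
end

section
/- Let $k$ be a local field, $q(x_1,\dots,x_n)$ a non-degenerate quadratic form over $k$, $p(t)\in k[t]$ nonzero, and $\alpha \in k$ a root of $p$ of even order $r$, with $p(t)=(t-\alpha)^r p_0(t)$, $p_0(\alpha)\neq 0$. If the quadratic form in $n+1$ variables $q(x_1,\dots,x_n) - p_0(\alpha) x_{n+1}^2$ is anisotropic over $k$, then the singular point $(0,\dots,0,\alpha)$ is NOT a limit of smooth $k$-points of the hypersurface $q(x)=p(t)$. -/
/-!
The form `Q(x, s) = q(x) - p₀(α) s²` is anisotropic, so by compactness of a shell in the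
locally compact space `kⁿ × k` it satisfies `‖Q v‖ ≥ C ‖v‖²` for some `C > 0`. A point `(x, t)`
of the hypersurface gives `Q(x, (t - α)^m) = (p₀(t) - p₀(α)) ((t - α)^m)²` with `r = 2m`; once
`‖p₀(t) - p₀(α)‖ < C` this forces `x = 0` and `t = α`, which is a singular point.
-/
open Polynomial Topology

theorem QuadraticMap.exists_pos_mul_norm_sq_le_norm {k E F : Type*} [NontriviallyNormedField k]
    [NormedAddCommGroup E] [NormedSpace k E] [ProperSpace E]
    [NormedAddCommGroup F] [NormedSpace k F]
    (Q : QuadraticMap k E F) (hQ : Continuous Q) (hQa : Q.Anisotropic) :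
    ∃ C > 0, ∀ v, C * ‖v‖ ^ 2 ≤ ‖Q v‖ := by
  rcases subsingleton_or_nontrivial E with _ | _
  · exact ⟨1, one_pos, fun v => by simp [Subsingleton.elim v 0]⟩
  obtain ⟨c, hc⟩ := NormedField.exists_one_lt_norm k
  -- The inequality is invariant under `v ↦ d • v`, so it suffices to prove it on a shell,
  -- where `‖Q‖` attains a positive minimum by compactness.
  have scale (C : ℝ) (d : k) (hd : d ≠ 0) (v : E) :
      C * ‖d • v‖ ^ 2 ≤ ‖Q (d • v)‖ ↔ C * ‖v‖ ^ 2 ≤ ‖Q v‖ := by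
    have hd' : 0 < ‖d‖ ^ 2 := by positivity
    rw [Q.map_smul, norm_smul, norm_smul, norm_mul, ← pow_two, mul_pow, mul_left_comm,
      mul_le_mul_iff_right₀ hd']
  set S : Set E := {v | 1 / ‖c‖ ≤ ‖v‖ ∧ ‖v‖ ≤ 1}
  have hS : IsCompact S :=
    (isCompact_closedBall (0 : E) 1).of_isClosed_subset
      ((isClosed_le continuous_const continuous_norm).inter
        (isClosed_le continuous_norm continuous_const))
      fun v hv => mem_closedBall_zero_iff.mpr hv.2
  have shell {v : E} (hv : v ≠ 0) : ∃ d ≠ (0 : k), d • v ∈ S := by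
    obtain ⟨d, hd, hlt, hge, -⟩ := rescale_to_shell hc one_pos hv
    exact ⟨d, hd, hge, hlt.le⟩
  obtain ⟨v₀, hv₀⟩ := exists_ne (0 : E)
  obtain ⟨d₀, -, hd₀⟩ := shell hv₀
  obtain ⟨w, hwS, hwmin⟩ := hS.exists_isMinOn ⟨_, hd₀⟩ hQ.norm.continuousOn
  have hw : w ≠ 0 := norm_pos_iff.mp ((one_div_pos.mpr (one_pos.trans hc)).trans_le hwS.1)
  refine ⟨‖Q w‖, norm_pos_iff.mpr fun h => hw (hQa w h), fun v => ?_⟩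
  rcases eq_or_ne v 0 with rfl | hv
  · simp
  obtain ⟨d, hd, hdv⟩ := shell hv
  rw [← scale _ d hd]
  calc ‖Q w‖ * ‖d • v‖ ^ 2 ≤ ‖Q w‖ * 1 := by
        gcongr
        exact pow_le_one₀ (norm_nonneg _) hdv.2
    _ ≤ ‖Q (d • v)‖ := by simpa using hwmin hdv

theorem Prod.eq_zero_of_mul_norm_sq_le {E F : Type*} [NormedAddCommGroup E]
    [NormedAddCommGroup F] {C ε : ℝ} (hε : 0 ≤ ε) (hεC : ε < C) {v : E × F}
    (h : C * ‖v‖ ^ 2 ≤ ε * ‖v.2‖ ^ 2) : v = 0 := by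
  have : ε * ‖v.2‖ ^ 2 ≤ ε * ‖v‖ ^ 2 := by gcongr; exact norm_snd_le v
  have : ‖v‖ ^ 2 ≤ 0 := by nlinarith
  simpa using this

theorem Polynomial.eval_derivative_X_sub_C_pow_mul {k : Type*} [CommRing k] (α : k) {r : ℕ}
    (hr : 2 ≤ r) (q : k[X]) : ((X - C α) ^ r * q).derivative.eval α = 0 := by
  simp [derivative_mul, derivative_pow, zero_pow, show r ≠ 0 by omega, show r - 1 ≠ 0 by omega]

section
open Matrix

variable {k ι : Type*} [CommRing k] [Fintype ι] [DecidableEq ι]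

noncomputable def Matrix.toQuadraticFormSubSq (M : Matrix ι ι k) (a : k) :
    QuadraticForm k ((ι → k) × k) :=
  M.toQuadraticForm'.prod (-a • QuadraticMap.sq)

theorem Matrix.toQuadraticFormSubSq_apply (M : Matrix ι ι k) (a : k) (x : ι → k) (s : k) :
    M.toQuadraticFormSubSq a (x, s) = x ⬝ᵥ M *ᵥ x - a * s ^ 2 := by
  simp [toQuadraticFormSubSq, toQuadraticForm', toLinearMap₂'_apply', pow_two, sub_eq_add_neg]

theorem Matrix.continuous_toQuadraticFormSubSq [TopologicalSpace k] [IsTopologicalRing k]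
    (M : Matrix ι ι k) (a : k) : Continuous (M.toQuadraticFormSubSq a) := by
  have : ⇑(M.toQuadraticFormSubSq a) = fun v => v.1 ⬝ᵥ M *ᵥ v.1 - a * v.2 ^ 2 := by
    ext ⟨x, s⟩; exact M.toQuadraticFormSubSq_apply a x s
  rw [this]
  exact (continuous_fst.dotProduct (continuous_const.matrix_mulVec continuous_fst)).sub
    (continuous_const.mul (continuous_snd.pow 2))

end

theorem stmt14_general (k : Type*) [NontriviallyNormedField k]
    [LocallyCompactSpace k]
    (n : ℕ)
    (M : Matrix (Fin n) (Fin n) k)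
    (p p₀ : Polynomial k)
    (α : k) (r : ℕ) (hreven : Even r)
    (hfact : p = (Polynomial.X - Polynomial.C α) ^ r * p₀)
    (haniso : ∀ (x : Fin n → k) (s : k),
      dotProduct x (M.mulVec x) - p₀.eval α * s ^ 2 = 0 →
      x = 0 ∧ s = 0) :
    ((0, α) : (Fin n → k) × k) ∉
      closure {P : (Fin n → k) × k |
        dotProduct P.1 (M.mulVec P.1) = p.eval P.2 ∧
        ¬ (M.mulVec P.1 = 0 ∧ p.derivative.eval P.2 = 0)} := by
  have := ProperSpace.of_locallyCompactSpace k (E := k)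
  set a := p₀.eval α
  set Q := M.toQuadraticFormSubSq a
  obtain ⟨C, hC, hQC⟩ := Q.exists_pos_mul_norm_sq_le_norm (M.continuous_toQuadraticFormSubSq a)
    fun ⟨x, s⟩ h => Prod.mk_eq_zero.mpr (haniso x s (by rwa [← M.toQuadraticFormSubSq_apply]))
  obtain ⟨m, rfl⟩ := hreven
  subst hfact
  have hnear : ∀ᶠ P : (Fin n → k) × k in 𝓝 (0, α), ‖p₀.eval P.2 - a‖ < C :=
    (isOpen_lt (by fun_prop) continuous_const).mem_nhds (by simpa [a] using hC)
  rw [mem_closure_iff_frequently, Filter.not_frequently]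
  filter_upwards [hnear]
  rintro ⟨x, t⟩ hnear ⟨hX, hsmooth⟩
  have hQx : Q (x, (t - α) ^ m) = (p₀.eval t - a) * ((t - α) ^ m) ^ 2 := by
    rw [M.toQuadraticFormSubSq_apply, hX]
    simp only [eval_mul, eval_pow, eval_sub, eval_X, eval_C]
    ring
  have hzero : (x, (t - α) ^ m) = 0 := Prod.eq_zero_of_mul_norm_sq_le (norm_nonneg _) hnear <|
    (hQC _).trans_eq (by rw [hQx, norm_mul, norm_pow])
  obtain ⟨rfl, hs⟩ := Prod.mk_eq_zero.mp hzero
  obtain ⟨ht, hm⟩ := pow_eq_zero_iff'.mp hs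
  obtain rfl := sub_eq_zero.mp ht
  exact hsmooth ⟨M.mulVec_zero, eval_derivative_X_sub_C_pow_mul t (by omega) p₀⟩

/-- `k` a local field, `q` a non-degenerate quadratic form over `k`
(Gram matrix `M`), `p ∈ k[t]` nonzero, `α ∈ k` a root of `p` of even order `r`,
with `p = (t-α)^r p₀`, `p₀(α) ≠ 0`.  If the `(n+1)`-variable quadratic form
`q(x₁,…,xₙ) - p₀(α) x_{n+1}²` is anisotropic over `k`, then the singular point
`(0,…,0,α)` is not a limit of smooth `k`-points of the hypersurface
`q(x) = p(t)`. -/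
theorem stmt14 (k : Type*) [NontriviallyNormedField k] [CompleteSpace k]
    [LocallyCompactSpace k] [CharZero k]
    (n : ℕ) (hn : 1 ≤ n)
    (M : Matrix (Fin n) (Fin n) k) (hsymm : M.IsSymm) (hdet : M.det ≠ 0)
    (p p₀ : Polynomial k) (hp : p ≠ 0)
    (α : k) (r : ℕ) (hreven : Even r) (hrpos : 0 < r)
    (hfact : p = (Polynomial.X - Polynomial.C α) ^ r * p₀)
    (hp₀ : p₀.eval α ≠ 0)
    (haniso : ∀ (x : Fin n → k) (s : k),
      dotProduct x (M.mulVec x) - p₀.eval α * s ^ 2 = 0 →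
      x = 0 ∧ s = 0) :
    ((0, α) : (Fin n → k) × k) ∉
      closure {P : (Fin n → k) × k |
        dotProduct P.1 (M.mulVec P.1) = p.eval P.2 ∧
        ¬ (M.mulVec P.1 = 0 ∧ p.derivative.eval P.2 = 0)} :=
  stmt14_general k n M p p₀ α r hreven hfact haniso
end

section
/- Let $k$ be a local field, $q$ a non-degenerate quadratic form in $n$ variables over $k$, $\alpha\in k$ a root of $p(t)$ of even order $r$ with $p(t)=(t-\alpha)^r p_0(t)$, $p_0(\alpha)\neq 0$. If the form $q(x_1,\dots,x_n) - p_0(\alpha)x_{n+1}^2$ is isotropic over $k$, then $(0,\dots,0,\alpha)$ is a limit of smooth $k$-points of the hypersurface $q(x)=p(t)$. -/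
/-!
Since `q` is non-degenerate and `q - p₀(α) x_{n+1}²` is isotropic, `q` represents `d = p₀(α)`:
`q(y) = d`. Write `r = 2m`. Near `α` the ratio `p₀(t)/d` is close to `1`, so it has a square root
`u(t)` depending continuously on `t` with `u(α) = 1` (inverse function theorem for `v ↦ v²`).
The curve `t ↦ ((t - α)^m u(t) y, t)` then lies on `q(x) = p(t)`, tends to `(0, α)`, and for
`t ≠ α` close to `α` its points are smooth because `p'` has only finitely many zeros.
-/

open Filter Topology Polynomial

namespace Matrix

variable {ι k : Type*} [Fintype ι]

theorem IsSymm.dotProduct_mulVec_comm [CommRing k] {M : Matrix ι ι k} (hM : M.IsSymm)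
    (x y : ι → k) : x ⬝ᵥ M *ᵥ y = y ⬝ᵥ M *ᵥ x := by
  rw [dotProduct_mulVec, ← mulVec_transpose, hM.eq, dotProduct_comm]

theorem smul_dotProduct_mulVec_smul [CommRing k] (M : Matrix ι ι k) (c : k) (x : ι → k) :
    c • x ⬝ᵥ M *ᵥ (c • x) = c ^ 2 * (x ⬝ᵥ M *ᵥ x) := by
  rw [mulVec_smul, smul_dotProduct, dotProduct_smul, smul_eq_mul, smul_eq_mul]
  ring

variable [DecidableEq ι] [Field k] [NeZero (2 : k)]

theorem exists_dotProduct_mulVec_eq_of_isotropic {M : Matrix ι ι k} (hM : M.IsSymm)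
    (hdet : M.det ≠ 0) {x : ι → k} (hx : x ≠ 0) (hqx : x ⬝ᵥ M *ᵥ x = 0) (d : k) :
    ∃ y, y ⬝ᵥ M *ᵥ y = d := by
  have hMx : M *ᵥ x ≠ 0 := fun h => hx (eq_zero_of_mulVec_eq_zero hdet h)
  obtain ⟨w, hw⟩ : ∃ w, w ⬝ᵥ M *ᵥ x ≠ 0 := by
    by_contra! h
    exact hMx (dotProduct_eq_zero_iff.mp fun w => by rw [dotProduct_comm, h])
  set c := (d - w ⬝ᵥ M *ᵥ w) / (2 * (w ⬝ᵥ M *ᵥ x))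
  refine ⟨c • x + w, ?_⟩
  have hexpand : (c • x + w) ⬝ᵥ M *ᵥ (c • x + w) =
      c ^ 2 * (x ⬝ᵥ M *ᵥ x) + 2 * c * (w ⬝ᵥ M *ᵥ x) + w ⬝ᵥ M *ᵥ w := by
    simp only [mulVec_add, mulVec_smul, add_dotProduct, dotProduct_add, smul_dotProduct,
      dotProduct_smul, smul_eq_mul, hM.dotProduct_mulVec_comm x w]
    ring
  rw [hexpand, hqx]
  simp only [c]
  field_simp
  ring

theorem exists_dotProduct_mulVec_eq_of_isotropic_sub_mul_sq {M : Matrix ι ι k}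
    (hM : M.IsSymm) (hdet : M.det ≠ 0) {d : k}
    (hiso : ∃ (x : ι → k) (s : k), ¬ (x = 0 ∧ s = 0) ∧ x ⬝ᵥ M *ᵥ x - d * s ^ 2 = 0) :
    ∃ y, y ⬝ᵥ M *ᵥ y = d := by
  obtain ⟨x, s, hxs, hq⟩ := hiso
  rw [sub_eq_zero] at hq
  by_cases hs : s = 0
  · exact exists_dotProduct_mulVec_eq_of_isotropic hM hdet (fun hx => hxs ⟨hx, hs⟩)
      (by simpa [hs] using hq) d
  · refine ⟨s⁻¹ • x, ?_⟩
    rw [smul_dotProduct_mulVec_smul, hq]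
    field_simp

end Matrix

theorem exists_sqrt_continuousAt_one (k : Type*) [NontriviallyNormedField k] [CompleteSpace k]
    [NeZero (2 : k)] :
    ∃ s : k → k, ContinuousAt s 1 ∧ s 1 = 1 ∧ ∀ᶠ c in 𝓝 1, s c ^ 2 = c := by
  have hsq : HasStrictDerivAt (fun v : k => v ^ 2) 2 1 := by
    simpa using hasStrictDerivAt_pow 2 (1 : k)
  have h2 : (2 : k) ≠ 0 := two_ne_zero
  have hinv := hsq.eventually_right_inverse h2
  have hcont := (hsq.hasStrictFDerivAt_equiv h2).localInverse_continuousAt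
  have h1 := (hsq.hasStrictFDerivAt_equiv h2).localInverse_apply_image
  simp only [one_pow] at hinv hcont h1
  exact ⟨_, hcont, h1, hinv⟩

namespace Polynomial

variable {k : Type*}

theorem derivative_ne_zero_of_isRoot [CommRing k] [IsDomain k] [CharZero k] {p : k[X]}
    (hp : p ≠ 0) {α : k} (hα : p.IsRoot α) : derivative p ≠ 0 := by
  intro h
  rw [eq_C_of_derivative_eq_zero h] at hp hα
  simp_all

theorem eventually_nhdsNE_eval_ne_zero [Field k] [TopologicalSpace k] [T1Space k] {p : k[X]}
    (hp : p ≠ 0) (α : k) : ∀ᶠ t in 𝓝[≠] α, p.eval t ≠ 0 :=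
  nhdsNE_le_cofinite α (finite_setOfPred_isRoot hp).eventually_cofinite_notMem

end Polynomial

theorem stmt15_general (k : Type*) [NontriviallyNormedField k] [CompleteSpace k]
    [CharZero k]
    (n : ℕ)
    (M : Matrix (Fin n) (Fin n) k) (hsymm : M.IsSymm) (hdet : M.det ≠ 0)
    (p p₀ : Polynomial k) (hp : p ≠ 0)
    (α : k) (r : ℕ) (hreven : Even r) (hrpos : 0 < r)
    (hfact : p = (Polynomial.X - Polynomial.C α) ^ r * p₀)
    (hp₀ : p₀.eval α ≠ 0)
    (hiso : ∃ (x : Fin n → k) (s : k), ¬ (x = 0 ∧ s = 0) ∧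
      dotProduct x (M.mulVec x) - p₀.eval α * s ^ 2 = 0) :
    ((0, α) : (Fin n → k) × k) ∈
      closure {P : (Fin n → k) × k |
        dotProduct P.1 (M.mulVec P.1) = p.eval P.2 ∧
        ¬ (M.mulVec P.1 = 0 ∧ p.derivative.eval P.2 = 0)} := by
  obtain ⟨m, rfl⟩ := hreven
  obtain ⟨y, hy⟩ := M.exists_dotProduct_mulVec_eq_of_isotropic_sub_mul_sq hsymm hdet hiso
  obtain ⟨s, hs_cont, hs_one, hs_sq⟩ := exists_sqrt_continuousAt_one k
  have hratio : Tendsto (fun t => p₀.eval t / p₀.eval α) (𝓝 α) (𝓝 1) := by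
    simpa [div_self hp₀] using ((p₀.continuousAt (a := α)).div_const (p₀.eval α)).tendsto
  set u := fun t => s (p₀.eval t / p₀.eval α)
  have hu : Tendsto u (𝓝 α) (𝓝 1) := hs_one ▸ hs_cont.tendsto.comp hratio
  have hm : m ≠ 0 := by rintro rfl; simp at hrpos
  have hcurve : Tendsto (fun t => (((t - α) ^ m * u t) • y, t)) (𝓝[≠] α) (𝓝 (0, α)) := by
    refine Tendsto.mono_left (Tendsto.prodMk_nhds ?_ tendsto_id) nhdsWithin_le_nhds
    simpa [hm] using (((continuous_sub_right α).tendsto α).pow m |>.mul hu).smul_const y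
  have hroot : p.IsRoot α := by simp [hfact, hm]
  refine mem_closure_of_tendsto hcurve ?_
  filter_upwards [nhdsWithin_le_nhds (hratio.eventually hs_sq),
    eventually_nhdsNE_eval_ne_zero (derivative_ne_zero_of_isRoot hp hroot) α] with t hut hderiv
  refine ⟨?_, fun h => hderiv h.2⟩
  rw [Matrix.smul_dotProduct_mulVec_smul, hy, hfact, eval_mul, eval_pow, eval_sub, eval_X,
    eval_C, mul_pow, ← pow_mul, show u t ^ 2 = _ from hut]
  field_simp
  ring

/-- `k` a local field, `q` a non-degenerate quadratic form over `k`
(Gram matrix `M`), `p ∈ k[t]` nonzero, `α ∈ k` a root of `p` of even order `r`,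
with `p = (t-α)^r p₀`, `p₀(α) ≠ 0`.  If the `(n+1)`-variable quadratic form
`q(x₁,…,xₙ) - p₀(α) x_{n+1}²` is isotropic over `k`, then the singular point
`(0,…,0,α)` is a limit of smooth `k`-points of the hypersurface `q(x) = p(t)`. -/
theorem stmt15 (k : Type*) [NontriviallyNormedField k] [CompleteSpace k]
    [LocallyCompactSpace k] [CharZero k]
    (n : ℕ) (hn : 1 ≤ n)
    (M : Matrix (Fin n) (Fin n) k) (hsymm : M.IsSymm) (hdet : M.det ≠ 0)
    (p p₀ : Polynomial k) (hp : p ≠ 0)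
    (α : k) (r : ℕ) (hreven : Even r) (hrpos : 0 < r)
    (hfact : p = (Polynomial.X - Polynomial.C α) ^ r * p₀)
    (hp₀ : p₀.eval α ≠ 0)
    (hiso : ∃ (x : Fin n → k) (s : k), ¬ (x = 0 ∧ s = 0) ∧
      dotProduct x (M.mulVec x) - p₀.eval α * s ^ 2 = 0) :
    ((0, α) : (Fin n → k) × k) ∈
      closure {P : (Fin n → k) × k |
        dotProduct P.1 (M.mulVec P.1) = p.eval P.2 ∧
        ¬ (M.mulVec P.1 = 0 ∧ p.derivative.eval P.2 = 0)} :=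
  stmt15_general k n M hsymm hdet p p₀ hp α r hreven hrpos hfact hp₀ hiso
end

section
/- Let $p$ be an odd prime with $2$ a quadratic non-residue mod $p$, and let $(x,y,z,t)\in\mathbb{Z}_p^4$ be a solution of $-9x^2+2xy+7y^2+2z^2=(2t^2-1)^2$ with $(2t^2-1)^2 \neq 2z^2$. Then both $y-x$ and $9x+7y$ are units in $\mathbb{Z}_p$, and the Hilbert symbol $(y-x, 2)_p = 1$. -/
/-!
Expanding gives `(y - x) * (9x + 7y) = (2t² - 1)² - 2z²`. Modulo `p` the form `a² - 2b²` is
anisotropic because `2` is a non-square, and `2t² - 1 = 0` would make `2 = t⁻²` a square, so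
the right-hand side is a unit and hence so are both factors. Every unit of `ℤ_p` is of the form
`a² - 2b²`: solve modulo `p` (two quadratics in one variable each take `(p + 1)/2` values), then lift
the coordinate that is nonzero mod `p` by Hensel's lemma.
-/

open Polynomial

theorem eq_zero_of_sq_sub_mul_sq_eq_zero {K : Type*} [Field K] {d a b : K} (hd : ¬IsSquare d)
    (h : a ^ 2 - d * b ^ 2 = 0) : a = 0 ∧ b = 0 := by
  have hb : b = 0 := by
    by_contra hb
    exact hd ⟨a / b, by field_simp; linear_combination -h⟩
  subst hb
  simpa using h

theorem sq_two_mul_sq_sub_one_sub_two_mul_sq_ne_zero {K : Type*} [Field K] (h2 : ¬IsSquare (2 : K))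
    (t z : K) : (2 * t ^ 2 - 1) ^ 2 - 2 * z ^ 2 ≠ 0 := by
  intro h
  have ht : 2 * t ^ 2 = 1 := sub_eq_zero.mp (eq_zero_of_sq_sub_mul_sq_eq_zero h2 h).1
  have ht0 : t ≠ 0 := by rintro rfl; simp at ht
  exact h2 ⟨t⁻¹, by field_simp; linear_combination ht⟩

theorem FiniteField.exists_sq_sub_mul_sq_eq {K : Type*} [Field K] [Fintype K]
    (hK : Fintype.card K % 2 = 1) {d : K} (hd : d ≠ 0) (w : K) :
    ∃ a b : K, a ^ 2 - d * b ^ 2 = w := by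
  have hdeg : (C (-d) * X ^ 2 + C (-w)).degree = 2 := by
    rw [degree_add_eq_left_of_degree_lt] <;> rw [degree_C_mul (neg_ne_zero.mpr hd), degree_X_pow]
    · rfl
    · exact degree_C_le.trans_lt (by decide)
  obtain ⟨a, b, hab⟩ := FiniteField.exists_root_sum_quadratic (degree_X_pow 2) hdeg hK
  simp only [eval_add, eval_mul, eval_pow, eval_X, eval_C] at hab
  exact ⟨a, b, by linear_combination hab⟩

namespace PadicInt

variable {p : ℕ} [Fact p.Prime]

theorem isUnit_iff_toZMod_ne_zero {w : ℤ_[p]} : IsUnit w ↔ toZMod w ≠ 0 := by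
  rw [Ne, ← RingHom.mem_ker, ker_toZMod, IsLocalRing.mem_maximalIdeal, mem_nonunits_iff, not_not]

theorem norm_lt_one_iff_toZMod_eq_zero {w : ℤ_[p]} : ‖w‖ < 1 ↔ toZMod w = 0 := by
  rw [← mem_nonunits, ← RingHom.mem_ker, ker_toZMod, IsLocalRing.mem_maximalIdeal]

theorem isUnit_two (hp : p ≠ 2) : IsUnit (2 : ℤ_[p]) := by
  rw [isUnit_iff_toZMod_ne_zero, map_ofNat]
  exact Ring.two_ne_zero (by rwa [ZMod.ringChar_zmod_n])

theorem isSquare_of_isSquare_toZMod (hp : p ≠ 2) {u : ℤ_[p]} (hu : IsUnit u)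
    (hsq : IsSquare (toZMod u)) : IsSquare u := by
  obtain ⟨c, hc⟩ := hsq
  obtain ⟨a, rfl⟩ := ZMod.ringHom_surjective toZMod c
  have ha : IsUnit a := by
    rw [isUnit_iff_toZMod_ne_zero]
    rintro h0
    exact isUnit_iff_toZMod_ne_zero.mp hu (by rw [hc, h0, mul_zero])
  have hder : ‖aeval a (derivative (X ^ 2 - C u))‖ = 1 := by
    rw [← isUnit_iff]
    simpa [one_add_one_eq_two] using (isUnit_two hp).mul ha
  obtain ⟨r, hr, -⟩ := hensels_lemma (F := X ^ 2 - C u) (a := a) <| by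
    rw [hder, one_pow, norm_lt_one_iff_toZMod_eq_zero]
    simp [hc, sq]
  exact ⟨r, by simpa [sq, sub_eq_zero, eq_comm] using hr⟩

theorem exists_eq_sq_sub_mul_sq (hp : p ≠ 2) {d w : ℤ_[p]} (hd : IsUnit d) (hw : IsUnit w) :
    ∃ a b : ℤ_[p], w = a ^ 2 - d * b ^ 2 := by
  have hcard : Fintype.card (ZMod p) % 2 = 1 := by
    rw [ZMod.card, ← Nat.odd_iff]
    exact (Fact.out : p.Prime).odd_of_ne_two hp
  obtain ⟨a₀, b₀, key⟩ := FiniteField.exists_sq_sub_mul_sq_eq hcard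
    (isUnit_iff_toZMod_ne_zero.mp hd) (toZMod w)
  obtain ⟨B, rfl⟩ := ZMod.ringHom_surjective toZMod b₀
  rcases eq_or_ne a₀ 0 with rfl | ha₀
  · obtain ⟨e, he⟩ := hd.exists_left_inv
    have he' := congrArg toZMod he
    rw [map_mul, map_one] at he'
    have hsq : toZMod (-w * e) = toZMod B * toZMod B := by
      rw [map_mul, map_neg]
      linear_combination toZMod e * key + toZMod B ^ 2 * he'
    obtain ⟨b, hb⟩ := isSquare_of_isSquare_toZMod hp
      (hw.neg.mul (IsUnit.of_mul_eq_one d he)) ⟨_, hsq⟩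
    exact ⟨0, b, by linear_combination (-d) * hb - w * he⟩
  · have hsq : toZMod (w + d * B ^ 2) = a₀ * a₀ := by
      rw [map_add, map_mul, map_pow]
      linear_combination -key
    have hu : IsUnit (w + d * B ^ 2) := by
      rw [isUnit_iff_toZMod_ne_zero, hsq]
      exact mul_ne_zero ha₀ ha₀
    obtain ⟨a, ha⟩ := isSquare_of_isSquare_toZMod hp hu ⟨_, hsq⟩
    exact ⟨a, B, by linear_combination ha⟩

end PadicInt

theorem stmt16_general (p : ℕ) [Fact p.Prime] (hodd : p ≠ 2)
    (hns : ¬ ∃ u : ZMod p, u ^ 2 = 2)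
    (x y z t : ℤ_[p])
    (h : -9 * x ^ 2 + 2 * x * y + 7 * y ^ 2 + 2 * z ^ 2 = (2 * t ^ 2 - 1) ^ 2) :
    IsUnit (y - x) ∧ IsUnit (9 * x + 7 * y) ∧
    ∃ a b : ℚ_[p], ((y - x : ℤ_[p]) : ℚ_[p]) = a ^ 2 - 2 * b ^ 2 := by
  have hfactor : (y - x) * (9 * x + 7 * y) = (2 * t ^ 2 - 1) ^ 2 - 2 * z ^ 2 := by
    linear_combination h
  have hunit : IsUnit ((y - x) * (9 * x + 7 * y)) := by
    rw [hfactor, PadicInt.isUnit_iff_toZMod_ne_zero]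
    simpa [map_ofNat] using sq_two_mul_sq_sub_one_sub_two_mul_sq_ne_zero
      (fun ⟨r, hr⟩ => hns ⟨r, by rw [hr, sq]⟩) (PadicInt.toZMod t) (PadicInt.toZMod z)
  have hyx := isUnit_of_mul_isUnit_left hunit
  obtain ⟨a, b, hab⟩ := PadicInt.exists_eq_sq_sub_mul_sq hodd (PadicInt.isUnit_two hodd) hyx
  exact ⟨hyx, isUnit_of_mul_isUnit_right hunit, a, b, by rw [hab]; norm_cast⟩

/-- Let `p` be an odd prime with `2` a quadratic non-residue mod
`p`, and `(x,y,z,t) ∈ ℤ_p⁴` a solution of `-9x² + 2xy + 7y² + 2z² = (2t²-1)²`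
with `(2t²-1)² ≠ 2z²`.  Then `y-x` and `9x+7y` are units of `ℤ_p` and the
Hilbert symbol `(y-x, 2)_p = 1`, i.e. `y-x` is a norm from `ℚ_p(√2)`:
`y - x = a² - 2b²` for some `a, b ∈ ℚ_p`. -/
theorem stmt16 (p : ℕ) [Fact p.Prime] (hodd : p ≠ 2)
    (hns : ¬ ∃ u : ZMod p, u ^ 2 = 2)
    (x y z t : ℤ_[p])
    (h : -9 * x ^ 2 + 2 * x * y + 7 * y ^ 2 + 2 * z ^ 2 = (2 * t ^ 2 - 1) ^ 2)
    (hnz : (2 * t ^ 2 - 1) ^ 2 ≠ 2 * z ^ 2) :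
    IsUnit (y - x) ∧ IsUnit (9 * x + 7 * y) ∧
    ∃ a b : ℚ_[p], ((y - x : ℤ_[p]) : ℚ_[p]) = a ^ 2 - 2 * b ^ 2 :=
  stmt16_general p hodd hns x y z t h
end
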